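/- arXiv:1112.0270 — 9 statements merged into one kernel-verified Lean document; each statement's English description precedes it below -/
import Mathlib

section
/- Let n ≥ 1 be an integer, let α_1 and λ be real numbers, let α_2,…,α_n and β_1,…,β_n be real numbers with β_j ≠ 0 and β_j ≠ λ for every j, and let A be the associated cascade rate matrix. Then A and I + λA⁻¹ are invertible, and the function x : ℝ → ℝ^n defined by x(t) = α_1 · (exp(tA) − e^{−λt} I) A⁻¹ (I + λA⁻¹)⁻¹ e_1 satisfies x(0) = 0 and, for every real t, x is differentiable at t with derivative A·x(t) + α_1 e^{−λt}·e_1 (i.e., x solves the linear cascade system with an exponentially decaying stimulus R(t) = α_1 e^{−λt} and resting initial conditions). -/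
open Matrix

/-- The cascade rate matrix (1-based indexing in `α`, `β`):
`A (j,j) = -β j`, `A (j+1, j) = α (j+1)`, zeros elsewhere. -/
noncomputable def cascadeMatrix (n : ℕ) (α β : ℕ → ℝ) : Matrix (Fin n) (Fin n) ℝ :=
  fun r c =>
    if r = c then -β (r.val + 1)
    else if r.val = c.val + 1 then α (r.val + 1)
    else 0

/-- The `j`-th standard basis vector of `ℝ^n` (1-based `j`). -/
def stdBasisVec (n j : ℕ) : Fin n → ℝ := fun r => if r.val + 1 = j then 1 else 0

/-!
`A` is lower triangular with diagonal entries `-β j`, and `A + λ I` is the cascade matrix with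
rates `β j - λ`, so both are invertible; since `1 + λ A⁻¹ = (A + λ I) A⁻¹`, the matrix
`B = A⁻¹ (1 + λ A⁻¹)⁻¹` is `(A + λ I)⁻¹`. For `M t = (exp (t A) - e^{-λ t}) B` this gives
`M' t = A exp (t A) B + λ e^{-λ t} B = A M t + e^{-λ t} (A + λ I) B = A M t + e^{-λ t}`,
and `x t = α₁ M t e₁`.
-/

section Cascade

variable {n : ℕ} {α β : ℕ → ℝ}

theorem cascadeMatrix_isLowerTriangular : (cascadeMatrix n α β).IsLowerTriangular := by
  intro i j (hij : i < j)
  have hne : ¬(i : ℕ) = j + 1 := by omega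
  simp [cascadeMatrix, hij.ne, hne]

theorem det_cascadeMatrix : (cascadeMatrix n α β).det = ∏ i : Fin n, -β (i + 1) := by
  simp [det_of_isLowerTriangular _ cascadeMatrix_isLowerTriangular, cascadeMatrix]

theorem isUnit_cascadeMatrix (hβ : ∀ j, 1 ≤ j → j ≤ n → β j ≠ 0) :
    IsUnit (cascadeMatrix n α β) := by
  rw [isUnit_iff_isUnit_det, det_cascadeMatrix, isUnit_iff_ne_zero]
  exact Finset.prod_ne_zero_iff.2 fun i _ => neg_ne_zero.2 (hβ _ (by omega) i.isLt)

theorem cascadeMatrix_add_smul_one (μ : ℝ) :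
    cascadeMatrix n α β + μ • 1 = cascadeMatrix n α (fun j => β j - μ) := by
  ext i j
  by_cases hij : i = j
  · subst hij
    simp [cascadeMatrix]
    ring
  · simp [cascadeMatrix, one_apply, hij]

end Cascade

section Inverse

variable {ι K : Type*} [Fintype ι] [DecidableEq ι] [CommRing K] {A : Matrix ι ι K}

theorem add_smul_one_mul_nonsing_inv (hA : IsUnit A) (c : K) :
    (A + c • 1) * A⁻¹ = 1 + c • A⁻¹ := by
  rw [Matrix.add_mul, mul_nonsing_inv A ((isUnit_iff_isUnit_det A).1 hA), smul_mul, Matrix.one_mul]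

theorem isUnit_one_add_smul_nonsing_inv {c : K} (hA : IsUnit A) (hAc : IsUnit (A + c • 1)) :
    IsUnit (1 + c • A⁻¹) :=
  add_smul_one_mul_nonsing_inv hA c ▸ hAc.mul (isUnit_nonsing_inv_iff.2 hA)

theorem add_smul_one_mul_inv_mul_inv {c : K} (hA : IsUnit A) (hAc : IsUnit (1 + c • A⁻¹)) :
    (A + c • 1) * (A⁻¹ * (1 + c • A⁻¹)⁻¹) = 1 := by
  rw [← Matrix.mul_assoc, add_smul_one_mul_nonsing_inv hA,
    mul_nonsing_inv _ ((isUnit_iff_isUnit_det _).1 hAc)]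

end Inverse

theorem hasDerivAt_exp_smul_sub_exp_smul_one_mul {𝔸 : Type*} [NormedRing 𝔸] [NormedAlgebra ℝ 𝔸]
    [CompleteSpace 𝔸] {A B : 𝔸} {lam : ℝ} (hB : (A + lam • 1) * B = 1) (t : ℝ) :
    HasDerivAt (fun u => (NormedSpace.exp (u • A) - Real.exp (-lam * u) • 1) * B)
      (A * ((NormedSpace.exp (t • A) - Real.exp (-lam * t) • 1) * B) + Real.exp (-lam * t) • 1)
      t := by
  have hdecay : HasDerivAt (fun u => Real.exp (-lam * u)) (-lam * Real.exp (-lam * t)) t := by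
    simpa [mul_comm] using ((hasDerivAt_id t).const_mul (-lam)).exp
  refine (((hasDerivAt_exp_smul_const' A t).sub (hdecay.smul_const 1)).mul_const B).congr_deriv ?_
  calc (A * NormedSpace.exp (t • A) - (-lam * Real.exp (-lam * t)) • 1) * B
      = A * ((NormedSpace.exp (t • A) - Real.exp (-lam * t) • 1) * B)
          + Real.exp (-lam * t) • ((A + lam • 1) * B) := by
        simp only [mul_sub, sub_mul, add_mul, mul_assoc, smul_mul_assoc, mul_smul_comm,
          one_mul, smul_add, smul_smul, neg_mul, neg_smul, sub_neg_eq_add]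
        rw [mul_comm (Real.exp _) lam]
        abel
    _ = _ := by rw [hB]

theorem HasDerivAt.mulVec_const {𝕜 m p : Type*} [NontriviallyNormedField 𝕜] [Fintype p]
    {M : 𝕜 → Matrix m p 𝕜} {M' : Matrix m p 𝕜} {t : 𝕜} (hM : HasDerivAt M M' t) (v : p → 𝕜) :
    HasDerivAt (fun u => M u *ᵥ v) (M' *ᵥ v) t := by
  refine hasDerivAt_pi.2 fun i => HasDerivAt.fun_sum fun j _ => ?_
  exact (hasDerivAt_pi.1 (hasDerivAt_pi.1 hM i) j).mul_const (v j)

attribute [local instance] Matrix.linftyOpNormedAddCommGroup Matrix.linftyOpNormedRing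
  Matrix.linftyOpNormedAlgebra

theorem cascade_decaying_stimulus_solution_general
    (n : ℕ) (α₁ lam : ℝ) (α β : ℕ → ℝ)
    (hβ : ∀ j, 1 ≤ j → j ≤ n → β j ≠ 0)
    (hbl : ∀ j, 1 ≤ j → j ≤ n → β j ≠ lam)
    (A : Matrix (Fin n) (Fin n) ℝ) (hA : A = cascadeMatrix n α β)
    (x : ℝ → Fin n → ℝ)
    (hx : ∀ t : ℝ,
      x t = α₁ • (((NormedSpace.exp (t • A) - Real.exp (-lam * t) • (1 : Matrix (Fin n) (Fin n) ℝ))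
        * A⁻¹ * (1 + lam • A⁻¹)⁻¹) *ᵥ stdBasisVec n 1)) :
    IsUnit A ∧ IsUnit (1 + lam • A⁻¹) ∧ x 0 = 0 ∧
      ∀ t : ℝ, HasDerivAt x (A *ᵥ x t + (α₁ * Real.exp (-lam * t)) • stdBasisVec n 1) t := by
  have hAunit : IsUnit A := hA ▸ isUnit_cascadeMatrix hβ
  have hAlam : IsUnit (A + lam • 1) := by
    rw [hA, cascadeMatrix_add_smul_one]
    exact isUnit_cascadeMatrix fun j hj hjn => sub_ne_zero.2 (hbl j hj hjn)
  have hunit := isUnit_one_add_smul_nonsing_inv hAunit hAlam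
  refine ⟨hAunit, hunit, by simp [hx], fun t => ?_⟩
  have hderiv := ((hasDerivAt_exp_smul_sub_exp_smul_one_mul
    (add_smul_one_mul_inv_mul_inv hAunit hunit) t).mulVec_const (stdBasisVec n 1)).const_smul α₁
  rw [show x = _ from funext fun u => by rw [hx u, Matrix.mul_assoc]]
  refine hderiv.congr_deriv ?_
  simp only [add_mulVec, smul_add, smul_mulVec, one_mulVec, mulVec_smul, mulVec_mulVec, smul_smul]
  -- the two sides differ only in the instance path through the ℓ∞ operator-norm structure
  rfl

/-- for a cascade matrix `A` with all `β j ≠ 0` and `β j ≠ λ`, the matrices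
`A` and `I + λ A⁻¹` are invertible, and
`x t = α₁ • (exp (t A) - e^{-λ t} I) A⁻¹ (I + λ A⁻¹)⁻¹ e₁` satisfies `x 0 = 0` and
`x' = A x + α₁ e^{-λ t} e₁`. -/
theorem cascade_decaying_stimulus_solution
    (n : ℕ) (hn : 1 ≤ n) (α₁ lam : ℝ) (α β : ℕ → ℝ)
    (hβ : ∀ j, 1 ≤ j → j ≤ n → β j ≠ 0)
    (hbl : ∀ j, 1 ≤ j → j ≤ n → β j ≠ lam)
    (A : Matrix (Fin n) (Fin n) ℝ) (hA : A = cascadeMatrix n α β)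
    (x : ℝ → Fin n → ℝ)
    (hx : ∀ t : ℝ,
      x t = α₁ • (((NormedSpace.exp (t • A) - Real.exp (-lam * t) • (1 : Matrix (Fin n) (Fin n) ℝ))
        * A⁻¹ * (1 + lam • A⁻¹)⁻¹) *ᵥ stdBasisVec n 1)) :
    IsUnit A ∧ IsUnit (1 + lam • A⁻¹) ∧ x 0 = 0 ∧
      ∀ t : ℝ, HasDerivAt x (A *ᵥ x t + (α₁ * Real.exp (-lam * t)) • stdBasisVec n 1) t :=
  cascade_decaying_stimulus_solution_general n α₁ lam α β hβ hbl A hA x hx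
end

section
/- Let n ≥ 1 be an integer, let α_1,…,α_n be real numbers and β a real number with β ≠ 0. Suppose x_1,…,x_n : ℝ → ℝ satisfy x_k(0) = 0 for all k and, for every real t, x_1 is differentiable at t with derivative α_1 − β x_1(t) and, for each 2 ≤ k ≤ n, x_k is differentiable at t with derivative α_k x_{k−1}(t) − β x_k(t). Then for every real t, x_n(t) = ((∏_{j=1}^n α_j) / β^n) · P(n, βt), where P is the normalised lower incomplete gamma function. -/
/-!
Put `y_k(t) = (∏_{j ≤ k} α_j / β^k) P(k, βt)`. Since `∂ₓ P(k+1, x) = e^{-x} x^k / k! = P(k, x) - P(k+1, x)`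
and `∂ₓ P(1, x) = 1 - P(1, x)`, the `y_k` satisfy the cascade equations with resting initial
conditions. The right-hand side `u(t) - β y` is Lipschitz in `y`, so solutions of each stage are
unique, and `x_k = y_k` follows by induction on `k`.
-/

/-- The normalised lower incomplete gamma function `P(n, x)` for integer `n ≥ 1`:
`P(n, x) = (1/(n-1)!) ∫_0^x e^{-s} s^{n-1} ds`. -/
noncomputable def normIncGamma (n : ℕ) (x : ℝ) : ℝ :=
  (∫ s in (0:ℝ)..x, Real.exp (-s) * s ^ (n - 1)) / (Nat.factorial (n - 1))

open Real Nat

lemma eq_of_hasDerivAt_eq_sub_mul_self {u f g : ℝ → ℝ} {β : ℝ}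
    (hf : ∀ t, HasDerivAt f (u t - β * f t) t) (hg : ∀ t, HasDerivAt g (u t - β * g t) t)
    (h0 : f 0 = g 0) : f = g := by
  have hlip : ∀ t, LipschitzWith ‖β‖₊ fun y => u t - β * y := fun t =>
    LipschitzWith.of_dist_le_mul fun y z => by
      rw [Real.dist_eq, Real.dist_eq, abs_sub_comm y z, coe_nnnorm, Real.norm_eq_abs, ← abs_mul]
      exact le_of_eq (congrArg abs (by ring))
  exact ODE_solution_unique_univ (v := fun t y => u t - β * y) (s := fun _ => Set.univ)
    (fun t => (hlip t).lipschitzOnWith) (fun t => ⟨hf t, trivial⟩) (fun t => ⟨hg t, trivial⟩) h0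

lemma continuous_exp_neg_mul_pow (m : ℕ) : Continuous fun s : ℝ => exp (-s) * s ^ m := by
  fun_prop

lemma hasDerivAt_normIncGamma (k : ℕ) (x : ℝ) :
    HasDerivAt (normIncGamma k) (exp (-x) * x ^ (k - 1) / (k - 1)!) x :=
  ((continuous_exp_neg_mul_pow (k - 1)).integral_hasStrictDerivAt 0 x).hasDerivAt.div_const _

lemma normIncGamma_zero_right (k : ℕ) : normIncGamma k 0 = 0 := by
  simp [normIncGamma]

lemma normIncGamma_succ_eq_sub {F : ℝ → ℝ} (k : ℕ)
    (hF : ∀ s, HasDerivAt F (exp (-s) * s ^ k / k !) s) (x : ℝ) :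
    normIncGamma (k + 1) x = F x - F 0 := by
  rw [normIncGamma, Nat.add_sub_cancel, ← intervalIntegral.integral_div]
  exact intervalIntegral.integral_eq_sub_of_hasDerivAt (fun s _ => hF s)
    (((continuous_exp_neg_mul_pow k).div_const _).intervalIntegrable 0 x)

lemma normIncGamma_one (x : ℝ) : normIncGamma 1 x = 1 - exp (-x) := by
  rw [normIncGamma_succ_eq_sub (F := fun s => -exp (-s)) 0 (fun s => ?_)]
  · simp only [neg_zero, exp_zero, sub_neg_eq_add]
    ring
  · simpa using ((hasDerivAt_neg s).exp).fun_neg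

lemma normIncGamma_succ {k : ℕ} (hk : k ≠ 0) (x : ℝ) :
    normIncGamma (k + 1) x = normIncGamma k x - exp (-x) * x ^ k / k ! := by
  rw [normIncGamma_succ_eq_sub (F := fun s => normIncGamma k s - exp (-s) * s ^ k / k !) k
    (fun s => ?_)]
  · simp [normIncGamma_zero_right, zero_pow hk]
  · obtain ⟨m, rfl⟩ := Nat.exists_eq_add_one_of_ne_zero hk
    refine ((hasDerivAt_normIncGamma (m + 1) s).fun_sub
      ((((hasDerivAt_neg s).exp).fun_mul (hasDerivAt_pow (m + 1) s)).div_const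
        ((m + 1)! : ℝ))).congr_deriv ?_
    simp only [Nat.add_sub_cancel, Nat.factorial_succ]
    push_cast
    field_simp
    ring

lemma hasDerivAt_normIncGamma_one (x : ℝ) :
    HasDerivAt (normIncGamma 1) (1 - normIncGamma 1 x) x := by
  convert hasDerivAt_normIncGamma 1 x using 1
  simp [normIncGamma_one]

lemma hasDerivAt_normIncGamma_succ {k : ℕ} (hk : k ≠ 0) (x : ℝ) :
    HasDerivAt (normIncGamma (k + 1)) (normIncGamma k x - normIncGamma (k + 1) x) x := by
  convert hasDerivAt_normIncGamma (k + 1) x using 1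
  rw [normIncGamma_succ hk, Nat.add_sub_cancel]
  ring

noncomputable def cascadeSolution (α : ℕ → ℝ) (β : ℝ) (k : ℕ) (t : ℝ) : ℝ :=
  (∏ j ∈ Finset.Icc 1 k, α j) / β ^ k * normIncGamma k (β * t)

section cascadeSolution

variable (α : ℕ → ℝ) {β : ℝ}

lemma cascadeSolution_zero_right (k : ℕ) : cascadeSolution α β k 0 = 0 := by
  simp [cascadeSolution, normIncGamma_zero_right]

lemma hasDerivAt_cascadeSolution_one (hβ : β ≠ 0) (t : ℝ) :
    HasDerivAt (cascadeSolution α β 1) (α 1 - β * cascadeSolution α β 1 t) t := by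
  have := ((hasDerivAt_normIncGamma_one (β * t)).comp t
    ((hasDerivAt_id t).const_mul β)).const_mul ((∏ j ∈ Finset.Icc 1 1, α j) / β ^ 1)
  refine this.congr_deriv ?_
  simp only [cascadeSolution, Finset.Icc_self, Finset.prod_singleton, pow_one]
  field_simp

lemma hasDerivAt_cascadeSolution_succ (hβ : β ≠ 0) {k : ℕ} (hk : k ≠ 0) (t : ℝ) :
    HasDerivAt (cascadeSolution α β (k + 1))
      (α (k + 1) * cascadeSolution α β k t - β * cascadeSolution α β (k + 1) t) t := by
  have := ((hasDerivAt_normIncGamma_succ hk (β * t)).comp t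
    ((hasDerivAt_id t).const_mul β)).const_mul ((∏ j ∈ Finset.Icc 1 (k + 1), α j) / β ^ (k + 1))
  refine this.congr_deriv ?_
  simp only [cascadeSolution, Finset.prod_Icc_succ_top (by omega : 1 ≤ k + 1)]
  field_simp
  ring

end cascadeSolution

/-- output of a weakly activated linear cascade of length `n` with constant
stimulus `α 1`, identical inactivation rates `β ≠ 0`, and resting initial conditions:
`x n t = ((∏ αⱼ)/βⁿ) P(n, β t)`. -/
theorem cascade_output_constant_stimulus
    (n : ℕ) (hn : 1 ≤ n) (α : ℕ → ℝ) (β : ℝ) (hβ : β ≠ 0)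
    (x : ℕ → ℝ → ℝ)
    (h0 : ∀ k, 1 ≤ k → k ≤ n → x k 0 = 0)
    (h1 : ∀ t : ℝ, HasDerivAt (x 1) (α 1 - β * x 1 t) t)
    (hk : ∀ k, 2 ≤ k → k ≤ n → ∀ t : ℝ,
      HasDerivAt (x k) (α k * x (k - 1) t - β * x k t) t) :
    ∀ t : ℝ, x n t = ((∏ j ∈ Finset.Icc 1 n, α j) / β ^ n) * normIncGamma n (β * t) := by
  have stage : ∀ k, 1 ≤ k → k ≤ n → x k = cascadeSolution α β k := by
    intro k hk1
    induction k, hk1 using Nat.le_induction with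
    | base =>
      intro h1n
      exact eq_of_hasDerivAt_eq_sub_mul_self h1 (hasDerivAt_cascadeSolution_one α hβ)
        (by rw [h0 1 le_rfl h1n, cascadeSolution_zero_right])
    | succ k hk1 IH =>
      intro hkn
      have hx := hk (k + 1) (by omega) hkn
      rw [Nat.add_sub_cancel, IH (by omega)] at hx
      exact eq_of_hasDerivAt_eq_sub_mul_self hx
        (hasDerivAt_cascadeSolution_succ α hβ (by omega))
        (by rw [h0 (k + 1) (by omega) hkn, cascadeSolution_zero_right])
  exact congrFun (stage n hn le_rfl)
end

section
/- Let n ≥ 1 be an integer, let α_1,…,α_n and β be real numbers. Suppose x_1,…,x_n : ℝ → ℝ satisfy x_k(0) = 0 for all k and, for every real t, x_1 is differentiable at t with derivative α_1 e^{−βt} − β x_1(t) and, for each 2 ≤ k ≤ n, x_k is differentiable at t with derivative α_k x_{k−1}(t) − β x_k(t). Then for every real t, x_n(t) = (∏_{j=1}^n α_j) · t^n · e^{−βt} / n! (the case where the decay rate λ of the stimulus equals the common inactivation rate β). -/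
/-!
Multiplying by `e^{βt}` turns `x' = u - β x` into `(e^{βt} x)' = e^{βt} u`, so a solution with
`x 0 = 0` is unique. The profiles `p_k t = t^k e^{-βt} / k!` satisfy `p_{k+1}' = p_k - β p_{k+1}`
with `p_{k+1} 0 = 0` and `p_0 t = e^{-βt}`, so by induction along the cascade
`x_k = (α_1 ⋯ α_k) p_k`.
-/

open Real

lemma eq_zero_of_hasDerivAt_neg_mul {β : ℝ} {f : ℝ → ℝ}
    (hf : ∀ t, HasDerivAt f (-β * f t) t) (h0 : f 0 = 0) (t : ℝ) : f t = 0 := by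
  have hderiv : ∀ s, HasDerivAt (fun s => f s * exp (β * s)) 0 s := by
    intro s
    have hexp : HasDerivAt (fun s => exp (β * s)) (exp (β * s) * β) s :=
      ((hasDerivAt_id s).const_mul β).exp.congr_deriv (by simp)
    exact ((hf s).mul hexp).congr_deriv (by ring)
  have hconst : f t * exp (β * t) = f 0 * exp (β * 0) :=
    is_const_of_deriv_eq_zero (fun s => (hderiv s).differentiableAt)
      (fun s => (hderiv s).deriv) t 0
  rw [h0, zero_mul] at hconst
  exact (mul_eq_zero.mp hconst).resolve_right (exp_ne_zero _)

lemma eq_of_hasDerivAt_sub_mul_self {β : ℝ} {u f g : ℝ → ℝ}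
    (hf : ∀ t, HasDerivAt f (u t - β * f t) t) (hg : ∀ t, HasDerivAt g (u t - β * g t) t)
    (h0 : f 0 = g 0) (t : ℝ) : f t = g t := by
  have hdiff : ∀ s, HasDerivAt (fun s => f s - g s) (-β * (f s - g s)) s :=
    fun s => ((hf s).sub (hg s)).congr_deriv (by ring)
  exact sub_eq_zero.mp (eq_zero_of_hasDerivAt_neg_mul hdiff (sub_eq_zero.mpr h0) t)

noncomputable def cascadeProfile (β : ℝ) (k : ℕ) (t : ℝ) : ℝ :=
  t ^ k * exp (-β * t) / (Nat.factorial k : ℝ)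

lemma cascadeProfile_zero (β t : ℝ) : cascadeProfile β 0 t = exp (-β * t) := by
  simp [cascadeProfile]

lemma cascadeProfile_succ_at_zero (β : ℝ) (k : ℕ) : cascadeProfile β (k + 1) 0 = 0 := by
  simp [cascadeProfile]

lemma hasDerivAt_cascadeProfile_succ (β : ℝ) (k : ℕ) (t : ℝ) :
    HasDerivAt (cascadeProfile β (k + 1))
      (cascadeProfile β k t - β * cascadeProfile β (k + 1) t) t := by
  have hexp : HasDerivAt (fun t => exp (-β * t)) (exp (-β * t) * -β) t :=
    ((hasDerivAt_id t).const_mul (-β)).exp.congr_deriv (by simp)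
  have hprod := (((hasDerivAt_pow (k + 1) t).mul hexp).div_const
    (Nat.factorial (k + 1) : ℝ))
  refine hprod.congr_deriv ?_
  simp only [cascadeProfile, Nat.factorial_succ, Nat.cast_mul, Nat.cast_succ,
    Nat.add_sub_cancel]
  field_simp
  ring

lemma eq_mul_cascadeProfile_succ {β c : ℝ} {k : ℕ} {f : ℝ → ℝ}
    (hf : ∀ t, HasDerivAt f (c * cascadeProfile β k t - β * f t) t) (h0 : f 0 = 0) (t : ℝ) :
    f t = c * cascadeProfile β (k + 1) t := by
  have hg : ∀ s, HasDerivAt (fun s => c * cascadeProfile β (k + 1) s)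
      (c * cascadeProfile β k s - β * (c * cascadeProfile β (k + 1) s)) s :=
    fun s => ((hasDerivAt_cascadeProfile_succ β k s).const_mul c).congr_deriv (by ring)
  exact eq_of_hasDerivAt_sub_mul_self hf hg (by simp [h0, cascadeProfile_succ_at_zero]) t

/-- output of a weakly activated linear cascade of length `n` with exponentially
decaying stimulus `α 1 * e^{-β t}` (the degenerate case `λ = β`), identical inactivation
rates `β`, and resting initial conditions: `x n t = (∏ αⱼ) tⁿ e^{-β t} / n!`. -/
theorem cascade_output_decaying_stimulus_degenerate
    (n : ℕ) (hn : 1 ≤ n) (α : ℕ → ℝ) (β : ℝ)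
    (x : ℕ → ℝ → ℝ)
    (h0 : ∀ k, 1 ≤ k → k ≤ n → x k 0 = 0)
    (h1 : ∀ t : ℝ, HasDerivAt (x 1) (α 1 * Real.exp (-β * t) - β * x 1 t) t)
    (hk : ∀ k, 2 ≤ k → k ≤ n → ∀ t : ℝ,
      HasDerivAt (x k) (α k * x (k - 1) t - β * x k t) t) :
    ∀ t : ℝ, x n t = (∏ j ∈ Finset.Icc 1 n, α j) * t ^ n * Real.exp (-β * t)
      / (Nat.factorial n : ℝ) := by
  suffices H : ∀ k, 1 ≤ k → k ≤ n → ∀ t,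
      x k t = (∏ j ∈ Finset.Icc 1 k, α j) * cascadeProfile β k t by
    intro t
    rw [H n hn le_rfl t, cascadeProfile]
    ring
  intro k hk1
  induction k, hk1 using Nat.le_induction with
  | base =>
    intro h1n
    have hstage : ∀ s, HasDerivAt (x 1) (α 1 * cascadeProfile β 0 s - β * x 1 s) s := by
      simpa only [cascadeProfile_zero] using h1
    simpa using eq_mul_cascadeProfile_succ hstage (h0 1 le_rfl h1n)
  | succ k hk1 ih =>
    intro hkn
    have hstage : ∀ s, HasDerivAt (x (k + 1))
        ((∏ j ∈ Finset.Icc 1 (k + 1), α j) * cascadeProfile β k s - β * x (k + 1) s) s := by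
      intro s
      refine (hk (k + 1) (by omega) hkn s).congr_deriv ?_
      rw [Nat.add_sub_cancel, ih (by omega) s, Finset.prod_Icc_succ_top (by omega)]
      ring
    exact eq_mul_cascadeProfile_succ hstage (h0 (k + 1) (by omega) hkn)
end

section
/- Let n ≥ 1 be an integer, let α_1, α_2,…,α_n, β, ε be real numbers with β ≠ 0 and β + ε ≠ 0, and for an index 1 ≤ i ≤ n let H_i be the ε-perturbed cascade rate matrix. Then each H_i is invertible, and for any two indices 1 ≤ i < h ≤ n, the solutions of the constant-stimulus cascades with perturbation at position i and at position h agree on all components at or below position h: for every index j with h ≤ j ≤ n (and also for every j with 1 ≤ j < i) and every real t, the j-th component of α_1 H_i⁻¹ (exp(tH_i) − I) e_1 equals the j-th component of α_1 H_h⁻¹ (exp(tH_h) − I) e_1. In particular, the final output x_n of the cascade is independent of the position of the perturbed inactivation rate. -/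
/-!
By the exponential series, `H⁻¹ (exp (t H) - 1) = ∑ₖ t^(k+1)/(k+1)! • H^k`, so it suffices
to compare the first columns of the powers of `H_i` and `H_h`. For a lower bidiagonal matrix
with diagonal `d` and subdiagonal `a`, the `m`-th entries of these columns have generating
function `(a₁ ⋯ aₘ) X^m / ∏_{l ≤ m} (1 - d_l X)`, which is symmetric in `d₀, …, dₘ`.
Moving the perturbation from position `i` to `h` permutes the first `j + 1` diagonal entries
when `h ≤ j + 1` and does not touch them when `j + 1 < i`.
-/

open Matrix

/-- The ε-perturbed cascade rate matrix `H_i` (1-based index `i` of the perturbed component):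
`H_i (j,j) = -β` for `j ≠ i`, `H_i (i,i) = -(β+ε)`, `H_i (j+1, j) = α (j+1)`, zeros elsewhere. -/
noncomputable def perturbedCascadeMatrix (n : ℕ) (α : ℕ → ℝ) (β ε : ℝ) (i : ℕ) :
    Matrix (Fin n) (Fin n) ℝ :=
  fun r c =>
    if r = c then (if r.val + 1 = i then -(β + ε) else -β)
    else if r.val = c.val + 1 then α (r.val + 1)
    else 0

open Finset PowerSeries

/-- `d r` is the entry at `(r, r)` and `a r` the one at `(r, r - 1)`; indices are 0-based. -/
def lowerBidiagonal {R : Type*} [Zero R] (n : ℕ) (d a : ℕ → R) : Matrix (Fin n) (Fin n) R :=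
  fun r c => if r = c then d r else if r.val = c.val + 1 then a r else 0

/-- `lowerBidiagonalColumn d a k m` is entry `m` of the first column of
`lowerBidiagonal n d a ^ k`, see `lowerBidiagonal_pow_mulVec_eq_column`. -/
def lowerBidiagonalColumn {R : Type*} [Semiring R] (d a : ℕ → R) : ℕ → ℕ → R
  | 0, m => if m = 0 then 1 else 0
  | k + 1, 0 => d 0 * lowerBidiagonalColumn d a k 0
  | k + 1, m + 1 =>
    d (m + 1) * lowerBidiagonalColumn d a k (m + 1) + a (m + 1) * lowerBidiagonalColumn d a k m

theorem lowerBidiagonal_pow_mulVec_eq_column {R : Type*} [Semiring R] (n : ℕ) (d a : ℕ → R)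
    (k : ℕ) :
    (lowerBidiagonal n d a ^ k *ᵥ fun r => if (r : ℕ) = 0 then 1 else 0) =
      fun r : Fin n => lowerBidiagonalColumn d a k r := by
  induction k with
  | zero =>
    funext r
    simp [lowerBidiagonalColumn]
  | succ k ih =>
    funext r
    rw [pow_succ', ← Matrix.mulVec_mulVec, ih, Matrix.mulVec, dotProduct]
    rcases r with ⟨_ | m, hm⟩
    · rw [Fintype.sum_eq_single ⟨0, hm⟩ fun c hc => ?_]
      · simp [lowerBidiagonal, lowerBidiagonalColumn]
      · simp [lowerBidiagonal, Ne.symm hc]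
    · rw [Fintype.sum_eq_add ⟨m + 1, hm⟩ ⟨m, by omega⟩ (by simp [Fin.ext_iff])
        fun c hc => ?_]
      · simp [lowerBidiagonal, lowerBidiagonalColumn]
      · have hcm : m ≠ c := fun h => hc.2 (Fin.ext h.symm)
        simp [lowerBidiagonal, Ne.symm hc.1, hcm]

theorem det_lowerBidiagonal {R : Type*} [CommRing R] (n : ℕ) (d a : ℕ → R) :
    (lowerBidiagonal n d a).det = ∏ r : Fin n, d r := by
  rw [Matrix.det_of_isLowerTriangular]
  · simp [lowerBidiagonal]
  · intro r c (hrc : r < c)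
    have hrc' : (r : ℕ) ≠ c + 1 := by omega
    simp [lowerBidiagonal, hrc.ne, hrc']

section GeneratingFunction

variable {R : Type*} [CommRing R]

theorem mk_lowerBidiagonalColumn_zero (d a : ℕ → R) :
    PowerSeries.mk (lowerBidiagonalColumn d a · 0) =
      1 + X * (C (d 0) * PowerSeries.mk (lowerBidiagonalColumn d a · 0)) := by
  ext (_ | k) <;> simp [lowerBidiagonalColumn]

theorem mk_lowerBidiagonalColumn_succ (d a : ℕ → R) (m : ℕ) :
    PowerSeries.mk (lowerBidiagonalColumn d a · (m + 1)) =
      X * (C (d (m + 1)) * PowerSeries.mk (lowerBidiagonalColumn d a · (m + 1)) +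
        C (a (m + 1)) * PowerSeries.mk (lowerBidiagonalColumn d a · m)) := by
  ext (_ | k) <;> simp [lowerBidiagonalColumn]

theorem mk_lowerBidiagonalColumn_mul_prod (d a : ℕ → R) (m : ℕ) :
    PowerSeries.mk (lowerBidiagonalColumn d a · m) * ∏ l ∈ range (m + 1), (1 - C (d l) * X) =
      C (∏ l ∈ range m, a (l + 1)) * X ^ m := by
  induction m with
  | zero =>
    simp only [zero_add, prod_range_one, prod_range_zero, map_one, pow_zero, mul_one]
    linear_combination mk_lowerBidiagonalColumn_zero d a
  | succ m ih =>
    rw [prod_range_succ _ (m + 1), prod_range_succ (fun l => a (l + 1)) m, map_mul]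
    linear_combination (∏ l ∈ range (m + 1), (1 - C (d l) * X)) *
      mk_lowerBidiagonalColumn_succ d a m + C (a (m + 1)) * X * ih

theorem lowerBidiagonalColumn_eq_of_prod_eq {d d' : ℕ → R} (a : ℕ → R) {m : ℕ}
    (h : ∏ l ∈ range (m + 1), (1 - C (d l) * X) = ∏ l ∈ range (m + 1), (1 - C (d' l) * X))
    (k : ℕ) : lowerBidiagonalColumn d a k m = lowerBidiagonalColumn d' a k m := by
  have hunit : IsUnit (∏ l ∈ range (m + 1), (1 - C (d l) * X)) := by
    simp [isUnit_iff_constantCoeff]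
  have hmk : PowerSeries.mk (lowerBidiagonalColumn d a · m) =
      PowerSeries.mk (lowerBidiagonalColumn d' a · m) :=
    hunit.mul_left_injective <| by
      dsimp only
      rw [mk_lowerBidiagonalColumn_mul_prod, h, mk_lowerBidiagonalColumn_mul_prod]
  simpa using congrArg (coeff k) hmk

theorem lowerBidiagonalColumn_comp_perm (d a : ℕ → R) {m : ℕ} {σ : Equiv.Perm ℕ}
    (hσ : {l | σ l ≠ l} ⊆ range (m + 1)) (k : ℕ) :
    lowerBidiagonalColumn (d ∘ σ) a k m = lowerBidiagonalColumn d a k m :=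
  lowerBidiagonalColumn_eq_of_prod_eq a (σ.prod_comp _ (fun l => 1 - C (d l) * X) hσ) k

theorem lowerBidiagonalColumn_congr {d d' : ℕ → R} (a : ℕ → R) {m : ℕ}
    (h : ∀ l ≤ m, d l = d' l) (k : ℕ) :
    lowerBidiagonalColumn d a k m = lowerBidiagonalColumn d' a k m :=
  lowerBidiagonalColumn_eq_of_prod_eq a
    (prod_congr rfl fun l hl => by rw [h l (Nat.lt_succ_iff.mp (mem_range.mp hl))]) k

end GeneratingFunction

open scoped Norms.Operator in
theorem Matrix.hasSum_inv_mul_exp_sub_one {𝕂 m : Type*} [RCLike 𝕂] [Fintype m] [DecidableEq m]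
    {H : Matrix m m 𝕂} (hH : IsUnit H.det) (t : 𝕂) :
    HasSum (fun k : ℕ => (t ^ (k + 1) / (k + 1).factorial) • H ^ k)
      (H⁻¹ * (NormedSpace.exp (t • H) - 1)) := by
  have hexp :=
    (hasSum_nat_add_iff' 1).mpr (NormedSpace.exp_series_hasSum_exp' (𝕂 := 𝕂) (t • H))
  rw [sum_range_one, pow_zero, Nat.factorial_zero, Nat.cast_one, inv_one, one_smul] at hexp
  have hterm (k : ℕ) : H⁻¹ * (((k + 1).factorial : 𝕂)⁻¹ • (t • H) ^ (k + 1)) =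
      (t ^ (k + 1) / (k + 1).factorial) • H ^ k := by
    rw [smul_pow, pow_succ' H, Matrix.mul_smul, Matrix.mul_smul, ← mul_assoc,
      Matrix.nonsing_inv_mul _ hH, one_mul, smul_smul, div_eq_inv_mul]
  have hmul := hexp.mul_left H⁻¹
  simp only [hterm] at hmul
  exact hmul

theorem Matrix.hasSum_inv_mul_exp_sub_one_mulVec {𝕂 m : Type*} [RCLike 𝕂] [Fintype m]
    [DecidableEq m] {H : Matrix m m 𝕂} (hH : IsUnit H.det) (t : 𝕂) (v : m → 𝕂) :
    HasSum (fun k : ℕ => (t ^ (k + 1) / (k + 1).factorial) • (H ^ k *ᵥ v))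
      ((H⁻¹ * (NormedSpace.exp (t • H) - 1)) *ᵥ v) := by
  have := (hasSum_inv_mul_exp_sub_one hH t).map
    (Matrix.mulVec.addMonoidHomLeft v) (continuous_id.matrix_mulVec continuous_const)
  simpa [Function.comp_def, Matrix.mulVec.addMonoidHomLeft, Matrix.smul_mulVec] using this

def perturbedDiagonal (β ε : ℝ) (i l : ℕ) : ℝ := if l + 1 = i then -(β + ε) else -β

theorem perturbedCascadeMatrix_eq_lowerBidiagonal (n : ℕ) (α : ℕ → ℝ) (β ε : ℝ) (i : ℕ) :
    perturbedCascadeMatrix n α β ε i =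
      lowerBidiagonal n (perturbedDiagonal β ε i) (fun l => α (l + 1)) :=
  rfl

theorem isUnit_det_perturbedCascadeMatrix (n : ℕ) (α : ℕ → ℝ) {β ε : ℝ} (hβ : β ≠ 0)
    (hβε : β + ε ≠ 0) (i : ℕ) : IsUnit (perturbedCascadeMatrix n α β ε i).det := by
  rw [perturbedCascadeMatrix_eq_lowerBidiagonal, det_lowerBidiagonal, isUnit_iff_ne_zero,
    prod_ne_zero_iff]
  intro r _
  unfold perturbedDiagonal
  split_ifs
  · exact neg_ne_zero.mpr hβε
  · exact neg_ne_zero.mpr hβ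

theorem perturbedDiagonal_comp_swap (β ε : ℝ) {i h : ℕ} (hi : 1 ≤ i) (hh : 1 ≤ h) :
    perturbedDiagonal β ε i ∘ Equiv.swap (i - 1) (h - 1) = perturbedDiagonal β ε h := by
  funext l
  simp only [Function.comp_apply, perturbedDiagonal, Equiv.swap_apply_def]
  split_ifs <;> first | rfl | omega

theorem lowerBidiagonalColumn_perturbedDiagonal_eq (β ε : ℝ) (a : ℕ → ℝ) {i h j : ℕ}
    (hi : 1 ≤ i) (hih : i < h) (hj : h ≤ j + 1 ∨ j + 1 < i) (k : ℕ) :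
    lowerBidiagonalColumn (perturbedDiagonal β ε i) a k j =
      lowerBidiagonalColumn (perturbedDiagonal β ε h) a k j := by
  rcases hj with hj | hj
  · rw [← perturbedDiagonal_comp_swap β ε hi (by omega : 1 ≤ h)]
    refine (lowerBidiagonalColumn_comp_perm _ a (fun l hl => ?_) k).symm
    have := Equiv.swap_apply_ne_self_iff.mp hl
    simp only [coe_range, Set.mem_Iio]
    omega
  · refine lowerBidiagonalColumn_congr a (fun l hl => ?_) k
    simp only [perturbedDiagonal]
    rw [if_neg (by omega), if_neg (by omega)]

theorem perturbed_cascade_position_independence_const_general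
    (n : ℕ) (α : ℕ → ℝ) (β ε : ℝ) (hβ : β ≠ 0) (hβε : β + ε ≠ 0) :
    (∀ i : ℕ, 1 ≤ i → i ≤ n → IsUnit (perturbedCascadeMatrix n α β ε i)) ∧
    (∀ i h : ℕ, 1 ≤ i → i < h → h ≤ n →
      ∀ j : Fin n, (h ≤ j.val + 1 ∨ j.val + 1 < i) → ∀ t : ℝ,
        (α 1 • (((perturbedCascadeMatrix n α β ε i)⁻¹
            * (NormedSpace.exp (t • perturbedCascadeMatrix n α β ε i) - 1))
            *ᵥ stdBasisVec n 1)) j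
        = (α 1 • (((perturbedCascadeMatrix n α β ε h)⁻¹
            * (NormedSpace.exp (t • perturbedCascadeMatrix n α β ε h) - 1))
            *ᵥ stdBasisVec n 1)) j) := by
  have hdet := isUnit_det_perturbedCascadeMatrix n α hβ hβε
  refine ⟨fun i _ _ => (Matrix.isUnit_iff_isUnit_det _).mpr (hdet i), ?_⟩
  intro i h hi hih _ j hj t
  have hstd : stdBasisVec n 1 = fun r : Fin n => if (r : ℕ) = 0 then 1 else 0 := by
    ext r; simp [stdBasisVec]
  have hseries (p : ℕ) := Pi.hasSum.mp
    (Matrix.hasSum_inv_mul_exp_sub_one_mulVec (hdet p) t (stdBasisVec n 1)) j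
  simp only [hstd, perturbedCascadeMatrix_eq_lowerBidiagonal, lowerBidiagonal_pow_mulVec_eq_column,
    Pi.smul_apply, smul_eq_mul] at hseries ⊢
  have hseries_i := hseries i
  simp only [lowerBidiagonalColumn_perturbedDiagonal_eq β ε _ hi hih hj] at hseries_i
  rw [hseries_i.unique (hseries h)]

/-- each `H_i` is invertible, and for perturbation positions `i < h`, the
constant-stimulus solutions `α₁ H⁻¹ (exp(t H) - I) e₁` for `H = H_i` and `H = H_h` agree on
every component `j` with `h ≤ j ≤ n` (and on every component `j < i`); in particular the final
output is independent of the position of the perturbation. -/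
theorem perturbed_cascade_position_independence_const
    (n : ℕ) (hn : 1 ≤ n) (α : ℕ → ℝ) (β ε : ℝ) (hβ : β ≠ 0) (hβε : β + ε ≠ 0) :
    (∀ i : ℕ, 1 ≤ i → i ≤ n → IsUnit (perturbedCascadeMatrix n α β ε i)) ∧
    (∀ i h : ℕ, 1 ≤ i → i < h → h ≤ n →
      ∀ j : Fin n, (h ≤ j.val + 1 ∨ j.val + 1 < i) → ∀ t : ℝ,
        (α 1 • (((perturbedCascadeMatrix n α β ε i)⁻¹
            * (NormedSpace.exp (t • perturbedCascadeMatrix n α β ε i) - 1))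
            *ᵥ stdBasisVec n 1)) j
        = (α 1 • (((perturbedCascadeMatrix n α β ε h)⁻¹
            * (NormedSpace.exp (t • perturbedCascadeMatrix n α β ε h) - 1))
            *ᵥ stdBasisVec n 1)) j) :=
  perturbed_cascade_position_independence_const_general n α β ε hβ hβε
end

section
/- Let n ≥ 1 be an integer, let α_1,…,α_n, β, ε be real numbers with ε ≠ 0, let 1 ≤ i ≤ n, let H_i be the ε-perturbed cascade rate matrix, let Q_i be the generalised-eigenvector matrix, and let J be the n×n matrix with J(1,1) = −(β+ε), J(k,k) = −β for 2 ≤ k ≤ n, J(k,k+1) = 1 for 2 ≤ k ≤ n−1, and all other entries zero. Then H_i Q_i = Q_i J; that is, the Jordan normal form J of H_i is independent of the position i of the perturbation. -/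
open Matrix

/-- `πⱼ = ∏_{l=1}^j α_l` (1-based product of activation rates). -/
noncomputable def piProd (α : ℕ → ℝ) (j : ℕ) : ℝ := ∏ l ∈ Finset.Icc 1 j, α l

/-- The eigenvector `q₁` of `H_i` (first column of `Q_i`), with 1-based entries
`q₁(j) = 0` for `j < i` and `q₁(j) = πⱼ (-1/ε)^{j-1}` for `j ≥ i`. -/
noncomputable def qOne (n : ℕ) (α : ℕ → ℝ) (ε : ℝ) (i : ℕ) : Fin n → ℝ :=
  fun r =>
    if r.val + 1 < i then 0 else piProd α (r.val + 1) * (-1 / ε) ^ r.val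

/-- The generalised eigenvector `v_k` of `H_i` associated with `-β` (1-based entries `j`):
if `i ≤ k` then `v_k(j) = 0` for `j ≤ k` and `v_k(j) = -πⱼ (-1/ε)^{j-k}` for `j > k`;
if `i > k` then `v_k(k) = π_k`, `v_k(j) = 0` for other `j < i`, and
`v_k(j) = -πⱼ (-1/ε)^{j-k}` for `j ≥ i`. -/
noncomputable def genEigVec (n : ℕ) (α : ℕ → ℝ) (ε : ℝ) (i k : ℕ) : Fin n → ℝ :=
  fun r =>
    let j := r.val + 1
    if i ≤ k then
      (if j ≤ k then 0 else -(piProd α j) * (-1 / ε) ^ (j - k))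
    else
      if j = k then piProd α k
      else if j < i then 0
      else -(piProd α j) * (-1 / ε) ^ (j - k)

/-- The generalised-eigenvector matrix `Q_i`: its first column is `q₁` and, for each
`1 ≤ k ≤ n-1`, its column `n-k+1` is `v_k`. -/
noncomputable def Qmat (n : ℕ) (α : ℕ → ℝ) (ε : ℝ) (i : ℕ) : Matrix (Fin n) (Fin n) ℝ :=
  fun r c =>
    if c.val = 0 then qOne n α ε i r
    else genEigVec n α ε i (n - (c.val + 1) + 1) r

/-- The Jordan normal form `J`: `J(1,1) = -(β+ε)`, `J(k,k) = -β` for `2 ≤ k ≤ n`,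
`J(k,k+1) = 1` for `2 ≤ k ≤ n-1`, zeros elsewhere. -/
noncomputable def Jmat (n : ℕ) (β ε : ℝ) : Matrix (Fin n) (Fin n) ℝ :=
  fun r c =>
    if r = c then (if r.val = 0 then -(β + ε) else -β)
    else if 1 ≤ r.val ∧ c.val = r.val + 1 then 1
    else 0

/-!
`H_i + β` is the weighted down-shift `x_j ↦ α_j x_{j-1}` plus `-ε` on row `i`. Writing
`t_k(j) = -π_j (-1/ε)^(j-k)`, both the shift and multiplication by `-ε` send `t_k` to `t_{k+1}`.
Hence `(H_i + β) q₁ = -ε q₁` and `(H_i + β) v_k = v_{k+1}`, where `v_n` vanishes on the first `n`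
rows because `i ≤ n`; read column by column, this is `H_i Q_i = Q_i J`.
-/

namespace PerturbedCascade

theorem piProd_succ (α : ℕ → ℝ) (j : ℕ) : piProd α (j + 1) = piProd α j * α (j + 1) :=
  Finset.prod_Icc_succ_top (Nat.le_add_left 1 j) α

variable (α : ℕ → ℝ) (ε : ℝ) (i : ℕ)

/-- `H_i + β` acting on columns written as 1-based sequences (index `0` is a phantom row above
row `1`). -/
def shift (f : ℕ → ℝ) (j : ℕ) : ℝ := (if j = i then -ε else 0) * f j + α j * f (j - 1)

/- `eigenSeq` and `genEigenSeq` are the 1-based entries of `qOne` and `genEigVec`, extended to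
all of `ℕ`; `tail α ε k j = -π_j (-1/ε)^(j-k)` is the tail they share. -/
noncomputable def tail (k j : ℕ) : ℝ := -piProd α j * (-1 / ε) ^ (j - k)

noncomputable def eigenSeq (j : ℕ) : ℝ := if j < i then 0 else -tail α ε 1 j

noncomputable def genEigenSeq (k j : ℕ) : ℝ :=
  if i ≤ k then (if j ≤ k then 0 else tail α ε k j)
  else if j = k then piProd α k
  else if j < i then 0
  else tail α ε k j

variable {α ε i}

theorem mul_tail_pred {k j : ℕ} (h : k < j) : α j * tail α ε k (j - 1) = tail α ε (k + 1) j := by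
  obtain ⟨m, rfl⟩ : ∃ m, j = m + 1 := ⟨j - 1, by omega⟩
  rw [tail, tail, piProd_succ, Nat.add_sub_cancel, Nat.add_sub_add_right]
  ring

theorem neg_mul_tail (hε : ε ≠ 0) {k j : ℕ} (h : k < j) :
    -ε * tail α ε k j = tail α ε (k + 1) j := by
  rw [tail, tail, show j - k = j - (k + 1) + 1 by omega, pow_succ]
  field_simp

theorem piProd_add_tail_self (k : ℕ) : piProd α k + tail α ε k k = 0 := by
  simp [tail]

theorem shift_genEigenSeq (hε : ε ≠ 0) (k : ℕ) {j : ℕ} (hj : 1 ≤ j) :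
    shift α ε i (genEigenSeq α ε i k) j = genEigenSeq α ε i (k + 1) j := by
  unfold shift genEigenSeq
  -- Every nonzero case moves `t_k` to `t_{k+1}` (by the shift, or by `-ε` on row `i`) or `π_k`
  -- to `π_{k+1}`; at `j = i = k + 1` the two new terms `π_{k+1} + t_{k+1}(k+1)` cancel.
  split_ifs <;> (try simp only [zero_mul, mul_zero, add_zero, zero_add]) <;> first
    | omega
    | rfl
    | exact mul_tail_pred (by omega)
    | exact neg_mul_tail hε (by omega)
    | (obtain rfl : j = k + 1 := by omega
       first
        | rw [piProd_succ, mul_comm]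
        | rw [neg_mul_tail hε (by omega), mul_comm, ← piProd_succ, add_comm,
            piProd_add_tail_self])

theorem genEigenSeq_of_le {k j : ℕ} (hk : i ≤ k) (hj : j ≤ k) : genEigenSeq α ε i k j = 0 := by
  simp [genEigenSeq, hk, hj]

theorem genEigenSeq_zero {k : ℕ} (hk : k ≠ 0) : genEigenSeq α ε i k 0 = 0 := by
  unfold genEigenSeq
  split_ifs <;> first | rfl | omega

theorem eigenSeq_zero (hi : 1 ≤ i) : eigenSeq α ε i 0 = 0 := if_pos hi

theorem shift_eigenSeq (hε : ε ≠ 0) (hi : 1 ≤ i) {j : ℕ} (hj : 1 ≤ j) :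
    shift α ε i (eigenSeq α ε i) j = -ε * eigenSeq α ε i j := by
  rcases lt_trichotomy j i with hji | rfl | hij
  · simp [shift, eigenSeq, hji, hji.ne, show j - 1 < i by omega]
  · simp [shift, eigenSeq, show j - 1 < j by omega]
  · simp only [shift, eigenSeq, hij.ne', if_false, zero_mul, neg_zero, zero_add, lt_asymm hij,
      show ¬j - 1 < i by omega, mul_neg, mul_tail_pred (show 1 < j by omega),
      neg_mul_tail hε (show 1 < j by omega)]

variable (α ε i) in
noncomputable def QmatCol (n c : ℕ) : ℕ → ℝ :=
  if c = 0 then eigenSeq α ε i else genEigenSeq α ε i (n - c)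

theorem Qmat_apply {n : ℕ} (r c : Fin n) : Qmat n α ε i r c = QmatCol α ε i n c (r.val + 1) := by
  by_cases hc : c.val = 0
  · simp [Qmat, QmatCol, qOne, eigenSeq, tail, hc]
  · simp only [Qmat, QmatCol, hc, if_false, show n - (c.val + 1) + 1 = n - c.val by omega]
    rfl

theorem QmatCol_zero (hi : 1 ≤ i) {n c : ℕ} (hc : c < n) : QmatCol α ε i n c 0 = 0 := by
  unfold QmatCol
  split_ifs
  exacts [eigenSeq_zero hi, genEigenSeq_zero (by omega)]

theorem perturbedCascadeMatrix_mul_apply {n : ℕ} (β : ℝ) {M : Matrix (Fin n) (Fin n) ℝ}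
    {c : Fin n} {f : ℕ → ℝ} (hM : ∀ x, M x c = f (x.val + 1)) (hf : f 0 = 0) (r : Fin n) :
    (perturbedCascadeMatrix n α β ε i * M) r c =
      -β * f (r.val + 1) + shift α ε i f (r.val + 1) := by
  simp only [Matrix.mul_apply, hM]
  rcases r with ⟨_ | s, hr⟩
  · rw [Fintype.sum_eq_single ⟨0, hr⟩ fun x hx => ?_]
    · simp only [perturbedCascadeMatrix, shift, hf, if_true]
      split_ifs <;> ring
    · simp [perturbedCascadeMatrix, Ne.symm hx]
  · rw [Fintype.sum_eq_add ⟨s, by omega⟩ ⟨s + 1, hr⟩ (by simp [Fin.ext_iff]) fun x hx => ?_]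
    · simp only [perturbedCascadeMatrix, shift, Fin.ext_iff, add_tsub_cancel_right]
      split_ifs <;> first | omega | ring
    · simp only [perturbedCascadeMatrix, Ne.symm hx.2, if_false]
      rw [if_neg fun h => hx.1 (Fin.ext (Nat.add_right_cancel h).symm), zero_mul]

theorem mul_Jmat_apply {n : ℕ} (β ε : ℝ) {M : Matrix (Fin n) (Fin n) ℝ} {r : Fin n}
    {g : ℕ → ℝ} (hM : ∀ x, M r x = g x.val) (c : Fin n) :
    (M * Jmat n β ε) r c =
      g c * (if c.val = 0 then -(β + ε) else -β) + if 2 ≤ c.val then g (c.val - 1) else 0 := by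
  simp only [Matrix.mul_apply, hM]
  by_cases hc : 2 ≤ c.val
  · obtain ⟨s, hs⟩ : ∃ s, c.val = s + 2 := ⟨c.val - 2, by omega⟩
    rw [Fintype.sum_eq_add ⟨s + 1, by omega⟩ c (by simp [Fin.ext_iff]; omega) fun x hx => ?_]
    · simp only [Jmat, Fin.ext_iff, if_pos hc, show c.val - 1 = s + 1 by omega]
      split_ifs <;> first | omega | ring
    · have hxs : x.val ≠ s + 1 := Fin.val_ne_of_ne hx.1
      simp only [Jmat, if_neg hx.2, if_neg (show ¬(1 ≤ x.val ∧ c.val = x.val + 1) by omega),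
        mul_zero]
  · rw [Fintype.sum_eq_single c fun x hx => ?_]
    · simp [Jmat, hc]
    · simp only [Jmat, if_neg hx, if_neg (show ¬(1 ≤ x.val ∧ c.val = x.val + 1) by omega),
        mul_zero]

end PerturbedCascade

theorem perturbed_cascade_jordan_form_general
    (n : ℕ) (α : ℕ → ℝ) (β ε : ℝ) (hε : ε ≠ 0)
    (i : ℕ) (hi : 1 ≤ i) (hin : i ≤ n) :
    perturbedCascadeMatrix n α β ε i * Qmat n α ε i = Qmat n α ε i * Jmat n β ε := by
  open PerturbedCascade in
  ext r c
  rw [perturbedCascadeMatrix_mul_apply β (Qmat_apply · c) (QmatCol_zero hi c.isLt),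
    mul_Jmat_apply β ε (g := fun x => QmatCol α ε i n x (r.val + 1)) (Qmat_apply r)]
  have hr : 1 ≤ r.val + 1 := Nat.le_add_left 1 r
  rcases c with ⟨_ | c, hc⟩
  · simp only [QmatCol, if_true, shift_eigenSeq hε hi hr, show ¬2 ≤ 0 by omega, if_false]
    ring
  · have hcoupling : (if 2 ≤ c + 1 then QmatCol α ε i n (c + 1 - 1) (r.val + 1) else 0) =
        genEigenSeq α ε i (n - (c + 1) + 1) (r.val + 1) := by
      rcases c with _ | c
      · exact (genEigenSeq_of_le (by omega) (by omega)).symm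
      · simp [QmatCol, show n - (c + 1 + 1) + 1 = n - (c + 1) by omega]
    rw [hcoupling]
    simp only [QmatCol, Nat.add_one_ne_zero, if_false, shift_genEigenSeq hε _ hr]
    ring

/-- `H_i Q_i = Q_i J`; the Jordan normal form `J` of `H_i` is independent of
the position `i` of the perturbation. -/
theorem perturbed_cascade_jordan_form
    (n : ℕ) (hn : 1 ≤ n) (α : ℕ → ℝ) (β ε : ℝ) (hε : ε ≠ 0)
    (i : ℕ) (hi : 1 ≤ i) (hin : i ≤ n) :
    perturbedCascadeMatrix n α β ε i * Qmat n α ε i = Qmat n α ε i * Jmat n β ε :=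
  perturbed_cascade_jordan_form_general n α β ε hε i hi hin
end

section
/- Let n ≥ 2 be an integer, let α_1,…,α_n, β, ε be real numbers with ε ≠ 0, let 1 ≤ i ≤ n, let H_i be the ε-perturbed cascade rate matrix, and set B_i = H_i + βI. For each 1 ≤ k ≤ n−1 define the vector v_k ∈ ℝ^n as follows: if i ≤ k, then v_k(j) = 0 for 1 ≤ j ≤ k and v_k(j) = −π_j (−1/ε)^{j−k} for k+1 ≤ j ≤ n; if i > k, then v_k(k) = π_k, v_k(j) = 0 for all other j < i, and v_k(j) = −π_j (−1/ε)^{j−k} for i ≤ j ≤ n. Then B_i v_{n−1} = 0 and B_i v_k = v_{k+1} for every 1 ≤ k ≤ n−2; that is, v_{n−1}, v_{n−2}, …, v_1 form a chain of generalised eigenvectors of H_i associated with the eigenvalue −β. -/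
open Matrix

/-! `B_i = H_i + βI` is the weighted shift `v ↦ (α_j v_{j-1})_j` plus the single diagonal entry
`-ε` at `(i, i)`. The shift carries the tail `-π_j (-1/ε)^{j-k}` of `v_k` to the tail of `v_{k+1}`
and the isolated entry `π_k` to `π_{k+1}` in row `k + 1`. In row `i` the extra `-ε` lowers the
power of `-1/ε` by one, which is what the tail of `v_{k+1}` needs there; when `i = k + 1` it
instead cancels the shifted `π_k`. The chain ends because `v_n = 0` once `i ≤ n`. -/

lemma piProd_succ (α : ℕ → ℝ) (j : ℕ) : piProd α (j + 1) = piProd α j * α (j + 1) :=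
  Finset.prod_Icc_succ_top (by omega) α

section CascadeMatrix

variable {n : ℕ} (α : ℕ → ℝ) (β ε : ℝ) (i : ℕ)

lemma perturbedCascadeMatrix_add_smul_one_apply (r c : Fin n) :
    (perturbedCascadeMatrix n α β ε i + β • (1 : Matrix (Fin n) (Fin n) ℝ)) r c =
      (if r = c then (if r.val + 1 = i then -ε else 0) else 0) +
        (if r.val = c.val + 1 then α (r.val + 1) else 0) := by
  simp only [Matrix.add_apply, Matrix.smul_apply, one_apply, perturbedCascadeMatrix, smul_eq_mul]
  by_cases hrc : r = c
  · subst hrc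
    simp only [if_true, show r.val ≠ r.val + 1 by omega, if_false]
    split_ifs <;> ring
  · simp [hrc]

lemma perturbedCascadeMatrix_add_smul_one_mulVec_apply (f : ℕ → ℝ) (hf : f 0 = 0) (r : Fin n) :
    ((perturbedCascadeMatrix n α β ε i + β • (1 : Matrix (Fin n) (Fin n) ℝ)) *ᵥ
        fun c => f (c.val + 1)) r =
      (if r.val + 1 = i then -ε else 0) * f (r.val + 1) + α (r.val + 1) * f r.val := by
  simp only [mulVec, dotProduct, perturbedCascadeMatrix_add_smul_one_apply, add_mul, ite_mul,
    zero_mul, Finset.sum_add_distrib, Finset.sum_ite_eq, Finset.mem_univ, if_true]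
  congr 1
  obtain ⟨_ | m, hm⟩ := r
  · simp [hf]
  · rw [Finset.sum_eq_single ⟨m, by omega⟩
      (fun c _ hc => if_neg fun h => hc (Fin.ext (by simp at h ⊢; omega))) (by simp)]
    simp

end CascadeMatrix

section GenEigSeq

variable (α : ℕ → ℝ) (ε : ℝ)

noncomputable def cascadeTail (k j : ℕ) : ℝ := -piProd α j * (-1 / ε) ^ (j - k)

/-- `genEigVec` read at the 1-based index `j`; its value at `j = 0` plays the role of `v_k(0) = 0`
in the shift. -/
noncomputable def genEigSeq (i k j : ℕ) : ℝ :=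
  if i ≤ k then (if j ≤ k then 0 else cascadeTail α ε k j)
  else if j = k then piProd α k
  else if j < i then 0
  else cascadeTail α ε k j

lemma genEigVec_eq_genEigSeq (n i k : ℕ) :
    genEigVec n α ε i k = fun r => genEigSeq α ε i k (r.val + 1) := rfl

lemma cascadeTail_self (k : ℕ) : cascadeTail α ε k k = -piProd α k := by
  simp [cascadeTail]

lemma mul_cascadeTail (k j : ℕ) :
    α (j + 1) * cascadeTail α ε k j = cascadeTail α ε (k + 1) (j + 1) := by
  simp only [cascadeTail, piProd_succ, Nat.add_sub_add_right]
  ring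

lemma neg_mul_cascadeTail (hε : ε ≠ 0) {k j : ℕ} (hkj : k < j) :
    -ε * cascadeTail α ε k j = cascadeTail α ε (k + 1) j := by
  rw [cascadeTail, cascadeTail, show j - k = j - (k + 1) + 1 by omega, pow_succ]
  field_simp

variable {α ε}

lemma genEigSeq_zero {i k : ℕ} (hk : 1 ≤ k) : genEigSeq α ε i k 0 = 0 := by
  unfold genEigSeq
  split_ifs <;> first | rfl | omega

lemma genEigSeq_succ (hε : ε ≠ 0) {i k : ℕ} (hk : 1 ≤ k) (j : ℕ) :
    (if j + 1 = i then -ε else 0) * genEigSeq α ε i k (j + 1) + α (j + 1) * genEigSeq α ε i k j =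
      genEigSeq α ε i (k + 1) (j + 1) := by
  unfold genEigSeq
  -- Each consistent branch is the tail recursion, the `-ε` step on the tail,
  -- `π_{k+1} = π_k α_{k+1}`, or (for `j + 1 = i = k + 1`) the cancellation of the two.
  split_ifs <;> try simp only [zero_mul, mul_zero, add_zero, zero_add]
  all_goals first
    | rfl
    | (exfalso; omega)
    | exact mul_cascadeTail α ε k j
    | exact neg_mul_cascadeTail α ε hε (by omega)
    | (obtain rfl : j = k := by omega
       rw [piProd_succ, mul_comm])
    | (obtain rfl : j = k := by omega
       rw [neg_mul_cascadeTail α ε hε (by omega), cascadeTail_self, piProd_succ]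
       ring)

end GenEigSeq

lemma perturbedCascadeMatrix_add_smul_one_mulVec_genEigVec {n : ℕ} (α : ℕ → ℝ) (β : ℝ) {ε : ℝ}
    (hε : ε ≠ 0) (i : ℕ) {k : ℕ} (hk : 1 ≤ k) :
    (perturbedCascadeMatrix n α β ε i + β • (1 : Matrix (Fin n) (Fin n) ℝ)) *ᵥ
        genEigVec n α ε i k = genEigVec n α ε i (k + 1) := by
  funext r
  rw [genEigVec_eq_genEigSeq,
    perturbedCascadeMatrix_add_smul_one_mulVec_apply α β ε i _ (genEigSeq_zero hk)]
  exact genEigSeq_succ hε hk r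

lemma genEigVec_self_eq_zero {n : ℕ} (α : ℕ → ℝ) (ε : ℝ) {i : ℕ} (hin : i ≤ n) :
    genEigVec n α ε i n = 0 := by
  funext r
  simp [genEigVec, hin, r.isLt]

theorem perturbed_cascade_generalised_eigenvectors_general
    (n : ℕ) (hn : 2 ≤ n) (α : ℕ → ℝ) (β ε : ℝ) (hε : ε ≠ 0)
    (i : ℕ) (hin : i ≤ n)
    (B : Matrix (Fin n) (Fin n) ℝ)
    (hB : B = perturbedCascadeMatrix n α β ε i + β • (1 : Matrix (Fin n) (Fin n) ℝ)) :
    B *ᵥ genEigVec n α ε i (n - 1) = 0 ∧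
      ∀ k : ℕ, 1 ≤ k → k ≤ n - 2 →
        B *ᵥ genEigVec n α ε i k = genEigVec n α ε i (k + 1) := by
  subst hB
  refine ⟨?_, fun k hk _ => perturbedCascadeMatrix_add_smul_one_mulVec_genEigVec α β hε i hk⟩
  rw [perturbedCascadeMatrix_add_smul_one_mulVec_genEigVec α β hε i (by omega : 1 ≤ n - 1),
    Nat.sub_add_cancel (by omega : 1 ≤ n)]
  exact genEigVec_self_eq_zero α ε hin

/-- with `B_i = H_i + β I`, the vectors `v_{n-1}, …, v_1` form a chain of
generalised eigenvectors of `H_i` associated with `-β`: `B_i v_{n-1} = 0` and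
`B_i v_k = v_{k+1}` for `1 ≤ k ≤ n-2`. -/
theorem perturbed_cascade_generalised_eigenvectors
    (n : ℕ) (hn : 2 ≤ n) (α : ℕ → ℝ) (β ε : ℝ) (hε : ε ≠ 0)
    (i : ℕ) (hi : 1 ≤ i) (hin : i ≤ n)
    (B : Matrix (Fin n) (Fin n) ℝ)
    (hB : B = perturbedCascadeMatrix n α β ε i + β • (1 : Matrix (Fin n) (Fin n) ℝ)) :
    B *ᵥ genEigVec n α ε i (n - 1) = 0 ∧
      ∀ k : ℕ, 1 ≤ k → k ≤ n - 2 →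
        B *ᵥ genEigVec n α ε i k = genEigVec n α ε i (k + 1) :=
  perturbed_cascade_generalised_eigenvectors_general n hn α β ε hε i hin B hB
end

section
/- Let n ≥ 1 be an integer, let α_1,…,α_n, β, ε be real numbers with ε ≠ 0 and α_l ≠ 0 for every l, let 1 ≤ i ≤ n, and let Q_i be the generalised-eigenvector matrix. Define the n×n matrix M by: M(1,j) = (−ε)^{j−1}/π_j for j ≤ i and M(1,j) = 0 for j > i; and for each 2 ≤ k ≤ n, M(k,j) = 1/π_j if j = n−k+1, M(k,j) = ε/π_j if j = n−k+2 and n−i+1 ≥ k, and M(k,j) = 0 otherwise. Then M Q_i = I; that is, Q_i is invertible with Q_i⁻¹ = M. -/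
/-!
Both matrices are diagonal rescalings of sign patterns: `Q_i = D S_Q E` and `M = E⁻¹ S_M D⁻¹`,
where `D = diag(π_j (-1/ε)^(j-1))`, `E` is diagonal with entries powers of `-ε`, and `S_Q`, `S_M`
have entries in `{0, ±1}`. Hence `M Q_i = E⁻¹ (S_M S_Q) E`, and `S_M S_Q = I` because the rows of
`S_M` are the functionals `x ↦ ∑_{j ≤ i} x_j` and `x ↦ x_p - [i ≤ p] x_{p+1}`, which send the
columns of `S_Q` (indicators of `j ≥ i`, and `e_k - [j ≥ i]` or `-[j > k]`) to unit vectors.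
-/

open Matrix

/-- The candidate inverse `M` of `Q_i` (1-based row `k`, column `j`):
`M(1,j) = (-ε)^{j-1}/πⱼ` for `j ≤ i` and `0` for `j > i`; for `2 ≤ k ≤ n`,
`M(k,j) = 1/πⱼ` if `j = n-k+1`, `M(k,j) = ε/πⱼ` if `j = n-k+2` and `n-i+1 ≥ k`,
and `M(k,j) = 0` otherwise. -/
noncomputable def Mmat (n : ℕ) (α : ℕ → ℝ) (ε : ℝ) (i : ℕ) : Matrix (Fin n) (Fin n) ℝ :=
  fun r c =>
    let k := r.val + 1
    let j := c.val + 1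
    if k = 1 then (if j ≤ i then (-ε) ^ (j - 1) / piProd α j else 0)
    else if j = n - k + 1 then 1 / piProd α j
    else if j = n - k + 2 ∧ n - i + 1 ≥ k then ε / piProd α j
    else 0

open Finset

theorem mul_eq_one_of_diagonal_scaling {m K : Type*} [Fintype m] [DecidableEq m]
    [DivisionRing K] {A B : Matrix m m K} (hAB : A * B = 1) {u w : m → K}
    (hu : ∀ x, u x ≠ 0) (hw : ∀ x, w x ≠ 0) :
    diagonal u⁻¹ * A * diagonal w⁻¹ * (diagonal w * B * diagonal u) = 1 := by
  have hdiag (v : m → K) (hv : ∀ x, v x ≠ 0) : diagonal v⁻¹ * diagonal v = 1 := by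
    rw [diagonal_mul_diagonal, ← diagonal_one]
    exact congrArg diagonal (funext fun x => inv_mul_cancel₀ (hv x))
  calc diagonal u⁻¹ * A * diagonal w⁻¹ * (diagonal w * B * diagonal u)
      = diagonal u⁻¹ * (A * (diagonal w⁻¹ * diagonal w) * B) * diagonal u := by
        simp only [Matrix.mul_assoc]
    _ = 1 := by rw [hdiag w hw, Matrix.mul_one, hAB, Matrix.mul_one, hdiag u hu]

section SignPattern

variable (R : Type*) [Ring R]

def signFirstCol (i j : ℕ) : R := if i ≤ j then 1 else 0

/-- Unifies the two cases of `genEigVec`: `e_k - [i ≤ j]` for `k < i`, and `-[k < j]` for `i ≤ k`. -/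
def signGenCol (i k j : ℕ) : R :=
  (if j = k ∧ k < i then 1 else 0) - (if i ≤ j ∧ k < j then 1 else 0)

/-- Rows `j` are 1-based as in `Qmat`; column `c ≠ 0` carries the pattern of `v_{n-c}`. -/
def cascadeSignCol (n i c j : ℕ) : R :=
  if c = 0 then signFirstCol R i j else signGenCol R i (n - c) j

def cascadeSignQ (n i : ℕ) : Matrix (Fin n) (Fin n) R :=
  of fun r c => cascadeSignCol R n i c (r.val + 1)

/-- Row `r ≠ 0` is `e_p - [i ≤ p] e_{p+1}` in the 1-based coordinates of `Mmat`, `p = n - r`. -/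
def cascadeSignM (n i : ℕ) : Matrix (Fin n) (Fin n) R := of fun r c =>
  if r.val = 0 then (if c.val < i then 1 else 0)
  else (if c.val + 1 = n - r.val then 1 else 0) -
    (if c.val = n - r.val ∧ i ≤ n - r.val then 1 else 0)

variable {R}

lemma sum_range_signFirstCol {i : ℕ} (hi : 1 ≤ i) :
    ∑ t ∈ range i, signFirstCol R i (t + 1) = 1 := by
  calc ∑ t ∈ range i, signFirstCol R i (t + 1)
      = ∑ t ∈ range i, if t = i - 1 then 1 else 0 := sum_congr rfl fun t ht => by
        rw [mem_range] at ht; unfold signFirstCol; split_ifs <;> first | omega | rfl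
    _ = 1 := by rw [sum_ite_eq', if_pos (by simp; omega)]

lemma sum_range_signGenCol {i k : ℕ} (hk : 1 ≤ k) :
    ∑ t ∈ range i, signGenCol R i k (t + 1) = 0 := by
  rcases lt_or_ge k i with hki | hik
  · calc ∑ t ∈ range i, signGenCol R i k (t + 1)
        = ∑ t ∈ range i, ((if t = k - 1 then 1 else 0) - if t = i - 1 then 1 else 0) :=
          sum_congr rfl fun t ht => by
            rw [mem_range] at ht; unfold signGenCol; split_ifs <;> first | omega | rfl
      _ = 0 := by rw [sum_sub_distrib, sum_ite_eq', sum_ite_eq', if_pos (by simp; omega),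
          if_pos (by simp; omega), sub_self]
  · exact sum_eq_zero fun t ht => by
      rw [mem_range] at ht; unfold signGenCol; split_ifs <;> first | omega | simp

lemma signFirstCol_sub_succ (i p : ℕ) :
    signFirstCol R i p - (if i ≤ p then signFirstCol R i (p + 1) else 0) = 0 := by
  unfold signFirstCol; split_ifs <;> first | omega | simp

lemma signGenCol_sub_succ (i k p : ℕ) :
    signGenCol R i k p - (if i ≤ p then signGenCol R i k (p + 1) else 0) =
      if p = k then 1 else 0 := by
  unfold signGenCol; split_ifs <;> first | omega | simp

lemma sum_cascadeSignM_mul_of_eq_zero {n i : ℕ} (hin : i ≤ n) (g : ℕ → R) {r : Fin n}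
    (hr : r.val = 0) :
    ∑ t, cascadeSignM R n i r t * g (t.val + 1) = ∑ t ∈ range i, g (t + 1) := by
  have hfilter : (range n).filter (· < i) = range i := by ext; simp; omega
  simp only [cascadeSignM, of_apply, if_pos hr, ite_mul, one_mul, zero_mul]
  rw [Fin.sum_univ_eq_sum_range (fun t => if t < i then g (t + 1) else 0), ← sum_filter,
    hfilter]

lemma sum_cascadeSignM_mul_of_ne_zero {n i : ℕ} (g : ℕ → R) {r : Fin n} (hr : r.val ≠ 0) :
    ∑ t, cascadeSignM R n i r t * g (t.val + 1) =
      g (n - r.val) - if i ≤ n - r.val then g (n - r.val + 1) else 0 := by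
  have hr' := r.isLt
  simp only [cascadeSignM, of_apply, if_neg hr, sub_mul, ite_mul, one_mul, zero_mul, ite_and]
  rw [Fin.sum_univ_eq_sum_range (fun t => (if t + 1 = n - r.val then g (t + 1) else 0) -
      if t = n - r.val then (if i ≤ n - r.val then g (t + 1) else 0) else 0),
    sum_sub_distrib, sum_ite_eq', if_pos (by simp; omega),
    sum_eq_single_of_mem (n - r.val - 1) (by simp; omega) fun t _ h => if_neg (by omega),
    if_pos (by omega), Nat.sub_add_cancel (by omega)]

theorem cascadeSignM_mul_cascadeSignQ {n i : ℕ} (hi : 1 ≤ i) (hin : i ≤ n) :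
    cascadeSignM R n i * cascadeSignQ R n i = 1 := by
  ext r c
  simp only [mul_apply, one_apply, cascadeSignQ, of_apply]
  have hc := c.isLt
  by_cases hr : r.val = 0
  · rw [sum_cascadeSignM_mul_of_eq_zero hin _ hr]
    by_cases hc0 : c.val = 0
    · simp only [if_pos (Fin.ext (hr.trans hc0.symm)), cascadeSignCol, if_pos hc0,
        sum_range_signFirstCol hi]
    · simp only [if_neg (fun h : r = c => hc0 (h ▸ hr)), cascadeSignCol, if_neg hc0]
      exact sum_range_signGenCol (by omega)
  · rw [sum_cascadeSignM_mul_of_ne_zero _ hr]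
    by_cases hc0 : c.val = 0
    · simp only [if_neg (fun h : r = c => hr (h ▸ hc0)), cascadeSignCol, if_pos hc0,
        signFirstCol_sub_succ]
    · simp only [cascadeSignCol, if_neg hc0, signGenCol_sub_succ]
      exact if_congr (by rw [Fin.ext_iff]; omega) rfl rfl

end SignPattern

lemma piProd_ne_zero {α : ℕ → ℝ} {j : ℕ} (hα : ∀ l, 1 ≤ l → l ≤ j → α l ≠ 0) :
    piProd α j ≠ 0 :=
  prod_ne_zero_iff.2 fun l hl => hα l (mem_Icc.1 hl).1 (mem_Icc.1 hl).2

noncomputable def cascadeRowScale (n : ℕ) (α : ℕ → ℝ) (ε : ℝ) : Fin n → ℝ :=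
  fun t => piProd α (t.val + 1) * (-1 / ε) ^ t.val

noncomputable def cascadeColScale (n : ℕ) (ε : ℝ) : Fin n → ℝ :=
  fun c => if c.val = 0 then 1 else (-ε) ^ (n - c.val - 1)

lemma neg_one_div_pow_mul_neg_pow {ε : ℝ} (hε : ε ≠ 0) {m t : ℕ} (h : m ≤ t) :
    (-1 / ε) ^ t * (-ε) ^ m = (-1 / ε) ^ (t - m) := by
  rw [show -1 / ε = (-ε)⁻¹ by rw [inv_neg, neg_div, one_div],
    inv_pow_sub₀ (neg_ne_zero.2 hε) h, inv_pow]

theorem Qmat_eq_diagonal_mul_cascadeSignQ_mul_diagonal (n : ℕ) (α : ℕ → ℝ) {ε : ℝ}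
    (hε : ε ≠ 0) (i : ℕ) :
    Qmat n α ε i =
      diagonal (cascadeRowScale n α ε) * cascadeSignQ ℝ n i * diagonal (cascadeColScale n ε) := by
  ext r c
  rw [mul_diagonal, diagonal_mul]
  by_cases hc0 : c.val = 0
  · simp only [Qmat, qOne, cascadeSignQ, of_apply, cascadeSignCol, signFirstCol,
      cascadeRowScale, cascadeColScale, if_pos hc0]
    split_ifs <;> first | omega | simp
  obtain ⟨k, hk', hk⟩ : ∃ k, n - (c.val + 1) + 1 = k ∧ n - c.val = k :=
    ⟨n - c.val, by omega, rfl⟩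
  simp only [Qmat, genEigVec, cascadeSignQ, of_apply, cascadeSignCol, signGenCol,
    cascadeRowScale, cascadeColScale, if_neg hc0, hk', hk]
  split_ifs <;> first
    | omega
    | (simp; done)
    | (rw [show r.val + 1 - k = r.val - (k - 1) by omega,
          ← neg_one_div_pow_mul_neg_pow hε (by omega : k - 1 ≤ r.val)]
       ring)
    | rw [show k = r.val + 1 by omega, Nat.add_sub_cancel, sub_zero, mul_one, mul_assoc,
          neg_one_div_pow_mul_neg_pow hε le_rfl, Nat.sub_self, pow_zero, mul_one]

lemma inv_cascadeRowScale_apply (n : ℕ) (α : ℕ → ℝ) (ε : ℝ) (t : Fin n) :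
    (cascadeRowScale n α ε)⁻¹ t = (-ε) ^ t.val / piProd α (t.val + 1) := by
  rw [Pi.inv_apply, cascadeRowScale, mul_inv, ← inv_pow,
    show (-1 / ε)⁻¹ = -ε by rw [neg_div, inv_neg, one_div, inv_inv], div_eq_inv_mul]

theorem Mmat_eq_diagonal_mul_cascadeSignM_mul_diagonal (n : ℕ) (α : ℕ → ℝ) {ε : ℝ}
    (hε : ε ≠ 0) (i : ℕ) :
    Mmat n α ε i = diagonal (cascadeColScale n ε)⁻¹ * cascadeSignM ℝ n i *
      diagonal (cascadeRowScale n α ε)⁻¹ := by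
  ext r c
  rw [mul_diagonal, diagonal_mul, inv_cascadeRowScale_apply, Pi.inv_apply]
  by_cases hr0 : r.val = 0
  · simp only [Mmat, cascadeSignM, of_apply, cascadeColScale, if_pos hr0]
    split_ifs <;> first | omega | simp
  obtain ⟨p, hcol₁, hcol₂, hp, hip⟩ : ∃ p, n - (r.val + 1) + 1 = p ∧
      n - (r.val + 1) + 2 = p + 1 ∧ n - r.val = p ∧ (n - i + 1 ≥ r.val + 1 ↔ i ≤ p) :=
    ⟨n - r.val, by omega, by omega, rfl, by omega⟩
  simp only [Mmat, cascadeSignM, of_apply, cascadeColScale, if_neg hr0, hcol₁, hcol₂, hp, hip]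
  have hpow : (-ε) ^ (p - 1) ≠ 0 := pow_ne_zero _ (neg_ne_zero.2 hε)
  split_ifs <;> first | omega | (simp; done) | skip
  · rw [show c.val = p - 1 by omega]
    field_simp
    ring
  · rw [show c.val = p - 1 + 1 by omega, pow_succ]
    field_simp
    ring

lemma cascadeRowScale_ne_zero {n : ℕ} {α : ℕ → ℝ} {ε : ℝ} (hε : ε ≠ 0)
    (hα : ∀ l, 1 ≤ l → l ≤ n → α l ≠ 0) (t : Fin n) : cascadeRowScale n α ε t ≠ 0 :=
  mul_ne_zero (piProd_ne_zero fun l hl hlt => hα l hl (by omega))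
    (pow_ne_zero _ (div_ne_zero (neg_ne_zero.2 one_ne_zero) hε))

lemma cascadeColScale_ne_zero {n : ℕ} {ε : ℝ} (hε : ε ≠ 0) (c : Fin n) :
    cascadeColScale n ε c ≠ 0 := by
  unfold cascadeColScale
  split_ifs
  exacts [one_ne_zero, pow_ne_zero _ (neg_ne_zero.2 hε)]

theorem perturbed_cascade_Q_inverse_general
    (n : ℕ) (α : ℕ → ℝ) (ε : ℝ) (hε : ε ≠ 0)
    (hα : ∀ l, 1 ≤ l → l ≤ n → α l ≠ 0)
    (i : ℕ) (hi : 1 ≤ i) (hin : i ≤ n) :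
    Mmat n α ε i * Qmat n α ε i = 1 := by
  rw [Mmat_eq_diagonal_mul_cascadeSignM_mul_diagonal n α hε i,
    Qmat_eq_diagonal_mul_cascadeSignQ_mul_diagonal n α hε i]
  exact mul_eq_one_of_diagonal_scaling (cascadeSignM_mul_cascadeSignQ hi hin)
    (cascadeColScale_ne_zero hε) (cascadeRowScale_ne_zero hε hα)

/-- `M Q_i = I`, i.e. `Q_i` is invertible with inverse `M`. -/
theorem perturbed_cascade_Q_inverse
    (n : ℕ) (hn : 1 ≤ n) (α : ℕ → ℝ) (β ε : ℝ) (hε : ε ≠ 0)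
    (hα : ∀ l, 1 ≤ l → l ≤ n → α l ≠ 0)
    (i : ℕ) (hi : 1 ≤ i) (hin : i ≤ n) :
    Mmat n α ε i * Qmat n α ε i = 1 :=
  perturbed_cascade_Q_inverse_general n α ε hε hα i hi hin
end

section
/- Let n ≥ 1 be an integer and let α_1,…,α_{n+1}, β, ε, λ be real numbers with β ≠ λ, ε ≠ 0, and β − λ + ε ≠ 0. Suppose x : ℝ → ℝ satisfies x(0) = 0 and, for every real t, x is differentiable at t with derivative α_{n+1} · ((∏_{j=1}^n α_j)/(β−λ)^n) · e^{−λt} · P(n, (β−λ)t) − (β+ε) x(t), where P is the normalised lower incomplete gamma function. Then for every real t, x(t) = (α_{n+1}/(β − λ + ε)) · ((∏_{j=1}^n α_j)/(β−λ)^n) · [ e^{−λt} − ((λ−β)^n/ε^n) e^{−(β+ε)t} − e^{−βt} ∑_{k=0}^{n−1} ((ε^{n−k} − (λ−β)^{n−k}) (β−λ)^k t^k) / (ε^{n−k} k!) ]. -/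
/-!
Since `P(n, x) = 1 - e^{-x} ∑_{k<n} x^k / k!`, the forcing term is a combination of `e^{-λt}` and
`e^{-βt}` times a polynomial of degree `< n`. The claimed right-hand side has the form
`e^{-λt} - c e^{-(β+ε)t} - e^{-βt} p(t)`, and it solves the equation exactly when
`p' + ε p = (β - λ + ε) ∑_{k<n} ((β - λ)t)^k / k!`; on coefficients this is the recursion
`(k + 1) c_{k+1} + ε c_k = (β - λ + ε) (β - λ)^k / k!` with `c_n = 0`, which the stated
coefficients satisfy. Both sides vanish at `0`, and solutions of a linear ODE are unique.
-/

open Finset Real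
open scoped Nat

theorem eq_of_hasDerivAt_eq_sub_mul {f x y : ℝ → ℝ} {a t₀ : ℝ}
    (hx : ∀ t, HasDerivAt x (f t - a * x t) t) (hy : ∀ t, HasDerivAt y (f t - a * y t) t)
    (h₀ : x t₀ = y t₀) : x = y := by
  have hlip (t : ℝ) : LipschitzWith ‖a‖₊ (fun z : ℝ => f t - a * z) :=
    LipschitzWith.of_dist_le_mul fun z w => by
      rw [Real.dist_eq, Real.dist_eq, coe_nnnorm, Real.norm_eq_abs, ← abs_mul, mul_sub,
        sub_sub_sub_cancel_left, abs_sub_comm]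
  exact ODE_solution_unique_univ (v := fun t z => f t - a * z) (s := fun _ => Set.univ)
    (fun t => (hlip t).lipschitzOnWith) (fun t => ⟨hx t, trivial⟩) (fun t => ⟨hy t, trivial⟩) h₀

theorem hasDerivAt_sum_range_succ_mul_pow (c : ℕ → ℝ) (n : ℕ) (t : ℝ) :
    HasDerivAt (fun t => ∑ k ∈ range (n + 1), c k * t ^ k)
      (∑ k ∈ range n, (k + 1) * c (k + 1) * t ^ k) t := by
  refine (HasDerivAt.fun_sum fun k _ => (hasDerivAt_pow k t).const_mul (c k)).congr_deriv ?_
  rw [sum_range_succ']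
  simp only [Nat.cast_add, Nat.cast_one, Nat.add_sub_cancel, CharP.cast_eq_zero, zero_mul,
    mul_zero, add_zero]
  exact sum_congr rfl fun k _ => by ring

theorem hasDerivAt_sum_range_succ_pow_div_factorial (m : ℕ) (y : ℝ) :
    HasDerivAt (fun y : ℝ => ∑ k ∈ range (m + 1), y ^ k / k !) (∑ k ∈ range m, y ^ k / k !) y := by
  simp only [div_eq_inv_mul]
  refine (hasDerivAt_sum_range_succ_mul_pow (fun k => (k ! : ℝ)⁻¹) m y).congr_deriv
    (sum_congr rfl fun k _ => ?_)
  rw [Nat.factorial_succ, Nat.cast_mul, Nat.cast_succ]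
  field_simp

theorem normIncGamma_eq_one_sub_exp_mul_sum {n : ℕ} (hn : 0 < n) (x : ℝ) :
    normIncGamma n x = 1 - exp (-x) * ∑ k ∈ range n, x ^ k / k ! := by
  obtain ⟨m, rfl⟩ : ∃ m, n = m + 1 := ⟨n - 1, by omega⟩
  have hF (y : ℝ) : HasDerivAt (fun y : ℝ => -(exp (-y) * ∑ k ∈ range (m + 1), y ^ k / k !))
      (exp (-y) * y ^ m / m !) y := by
    refine ((hasDerivAt_neg y).exp.mul
      (hasDerivAt_sum_range_succ_pow_div_factorial m y)).neg.congr_deriv ?_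
    rw [sum_range_succ]
    ring
  rw [normIncGamma, Nat.add_sub_cancel, ← intervalIntegral.integral_div,
    intervalIntegral.integral_eq_sub_of_hasDerivAt (fun y _ => hF y)
    ((by fun_prop : Continuous _).intervalIntegrable _ _)]
  simp [sum_range_succ']
  ring

section PerturbedOutput

variable (n : ℕ) (β ε lam : ℝ)

/-- The truncated `n - k` makes `perturbedCoeff n β ε lam n = 0`. -/
noncomputable def perturbedCoeff (k : ℕ) : ℝ :=
  (ε ^ (n - k) - (lam - β) ^ (n - k)) * (β - lam) ^ k / (ε ^ (n - k) * k !)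

noncomputable def perturbedPoly (t : ℝ) : ℝ :=
  ∑ k ∈ range n, perturbedCoeff n β ε lam k * t ^ k

noncomputable def perturbedOutput (A : ℝ) (t : ℝ) : ℝ :=
  A / (β - lam + ε) * (exp (-lam * t) - (lam - β) ^ n / ε ^ n * exp (-(β + ε) * t)
    - exp (-β * t) * perturbedPoly n β ε lam t)

variable {n β ε lam}

theorem perturbedPoly_eq_sum_range_succ (t : ℝ) :
    perturbedPoly n β ε lam t = ∑ k ∈ range (n + 1), perturbedCoeff n β ε lam k * t ^ k := by
  simp [perturbedPoly, sum_range_succ, perturbedCoeff]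

theorem succ_mul_perturbedCoeff_succ (hε : ε ≠ 0) {k : ℕ} (hk : k < n) :
    (k + 1) * perturbedCoeff n β ε lam (k + 1)
      = (β - lam + ε) * ((β - lam) ^ k / k !) - ε * perturbedCoeff n β ε lam k := by
  obtain ⟨p, hp⟩ : ∃ p, n - k = p + 1 := ⟨n - k - 1, by omega⟩
  have hp' : n - (k + 1) = p := by omega
  rw [perturbedCoeff, perturbedCoeff, hp, hp', Nat.factorial_succ, Nat.cast_mul, Nat.cast_succ]
  field_simp
  ring

theorem hasDerivAt_perturbedPoly (hε : ε ≠ 0) (t : ℝ) :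
    HasDerivAt (perturbedPoly n β ε lam)
      ((β - lam + ε) * ∑ k ∈ range n, ((β - lam) * t) ^ k / (k !) - ε * perturbedPoly n β ε lam t)
      t := by
  refine ((hasDerivAt_sum_range_succ_mul_pow _ n t).congr_of_eventuallyEq
    (.of_forall perturbedPoly_eq_sum_range_succ)).congr_deriv ?_
  rw [perturbedPoly, mul_sum, mul_sum, ← sum_sub_distrib]
  refine sum_congr rfl fun k hk => ?_
  rw [succ_mul_perturbedCoeff_succ hε (mem_range.mp hk), mul_pow]
  ring

theorem perturbedPoly_zero (hε : ε ≠ 0) :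
    perturbedPoly n β ε lam 0 = 1 - (lam - β) ^ n / ε ^ n := by
  rw [perturbedPoly_eq_sum_range_succ, sum_range_succ']
  simp [perturbedCoeff, sub_div, hε]

theorem perturbedOutput_zero (hε : ε ≠ 0) (A : ℝ) : perturbedOutput n β ε lam A 0 = 0 := by
  simp [perturbedOutput, perturbedPoly_zero hε]

theorem hasDerivAt_perturbedOutput (hn : 0 < n) (hε : ε ≠ 0) (hble : β - lam + ε ≠ 0)
    (A t : ℝ) :
    HasDerivAt (perturbedOutput n β ε lam A)
      (A * exp (-lam * t) * normIncGamma n ((β - lam) * t)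
        - (β + ε) * perturbedOutput n β ε lam A t) t := by
  have hexp (c : ℝ) : HasDerivAt (fun t => exp (c * t)) (c * exp (c * t)) t := by
    simpa [mul_comm] using ((hasDerivAt_id t).const_mul c).exp
  refine ((((hexp (-lam)).sub ((hexp (-(β + ε))).const_mul ((lam - β) ^ n / ε ^ n))).sub
    ((hexp (-β)).mul (hasDerivAt_perturbedPoly hε t))).const_mul
      (A / (β - lam + ε))).congr_deriv ?_
  have hsplit : exp (-(lam * t)) * exp (-((β - lam) * t)) = exp (-(β * t)) := by
    rw [← exp_add]; ring_nf
  rw [normIncGamma_eq_one_sub_exp_mul_sum hn, perturbedOutput]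
  field_simp
  linear_combination
    (A * ε ^ n * (β - lam + ε) * ∑ k ∈ range n, ((β - lam) * t) ^ k / k !) * hsplit

end PerturbedOutput

theorem perturbed_output_decaying_stimulus_general
    (n : ℕ) (hn : 1 ≤ n) (α : ℕ → ℝ) (β ε lam : ℝ)
    (hε : ε ≠ 0) (hble : β - lam + ε ≠ 0)
    (x : ℝ → ℝ) (h0 : x 0 = 0)
    (hx : ∀ t : ℝ, HasDerivAt x
      (α (n + 1) * ((∏ j ∈ Finset.Icc 1 n, α j) / (β - lam) ^ n) * Real.exp (-lam * t)
        * normIncGamma n ((β - lam) * t) - (β + ε) * x t) t) :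
    ∀ t : ℝ, x t = (α (n + 1) / (β - lam + ε)) * ((∏ j ∈ Finset.Icc 1 n, α j) / (β - lam) ^ n) *
      (Real.exp (-lam * t) - ((lam - β) ^ n / ε ^ n) * Real.exp (-(β + ε) * t)
        - Real.exp (-β * t) * ∑ k ∈ Finset.range n,
            (ε ^ (n - k) - (lam - β) ^ (n - k)) * (β - lam) ^ k * t ^ k
              / (ε ^ (n - k) * Nat.factorial k)) := by
  set A := α (n + 1) * ((∏ j ∈ Finset.Icc 1 n, α j) / (β - lam) ^ n)
  have hxy : x = perturbedOutput n β ε lam A :=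
    eq_of_hasDerivAt_eq_sub_mul hx (hasDerivAt_perturbedOutput hn hε hble A)
      (h0.trans (perturbedOutput_zero hε A).symm)
  intro t
  simp only [hxy, perturbedOutput, perturbedPoly, perturbedCoeff, div_mul_eq_mul_div, A]

/-- solution for the ε-perturbed output protein of a reordered cascade under an
exponentially decaying stimulus with `β ≠ λ`. -/
theorem perturbed_output_decaying_stimulus
    (n : ℕ) (hn : 1 ≤ n) (α : ℕ → ℝ) (β ε lam : ℝ)
    (hbl : β ≠ lam) (hε : ε ≠ 0) (hble : β - lam + ε ≠ 0)
    (x : ℝ → ℝ) (h0 : x 0 = 0)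
    (hx : ∀ t : ℝ, HasDerivAt x
      (α (n + 1) * ((∏ j ∈ Finset.Icc 1 n, α j) / (β - lam) ^ n) * Real.exp (-lam * t)
        * normIncGamma n ((β - lam) * t) - (β + ε) * x t) t) :
    ∀ t : ℝ, x t = (α (n + 1) / (β - lam + ε)) * ((∏ j ∈ Finset.Icc 1 n, α j) / (β - lam) ^ n) *
      (Real.exp (-lam * t) - ((lam - β) ^ n / ε ^ n) * Real.exp (-(β + ε) * t)
        - Real.exp (-β * t) * ∑ k ∈ Finset.range n,
            (ε ^ (n - k) - (lam - β) ^ (n - k)) * (β - lam) ^ k * t ^ k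
              / (ε ^ (n - k) * Nat.factorial k)) :=
  perturbed_output_decaying_stimulus_general n hn α β ε lam hε hble x h0 hx
end

section
/- Let n ≥ 1 be an integer and let α_1,…,α_{n+1}, β, ε be real numbers with ε ≠ 0. Suppose x : ℝ → ℝ satisfies x(0) = 0 and, for every real t, x is differentiable at t with derivative α_{n+1} · ((∏_{j=1}^n α_j) t^n / n!) · e^{−βt} − (β+ε) x(t). Then for every real t, x(t) = ((∏_{l=1}^{n+1} α_l)/ε^{n+1}) · e^{−βt} · [ ε^n ∑_{k=0}^n ((−1)^k t^{n−k}) / (ε^k (n−k)!) + (−1)^{n+1} e^{−εt} ]. -/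
/-!
Multiplying by `exp (β t)` turns the equation into `z' = A tⁿ / n! - ε z`, `z 0 = 0`, with
`A = ∏ αₗ`. Its solution is `A / (-ε)ⁿ⁺¹` times the Taylor remainder
`exp (-ε t) - ∑_{j ≤ n} (-ε t)ʲ / j!`, whose derivative is `-ε` times itself plus the dropped term
`-ε (-ε t)ⁿ / n!`. Reflecting the summation index turns this into the stated closed form, and
uniqueness of solutions of a Lipschitz ODE identifies it with `x`.
-/

open Finset Real Nat

theorem eq_of_hasDerivAt_eq_sub_mul_s16 {g y z : ℝ → ℝ} {c : ℝ}
    (hy : ∀ t, HasDerivAt y (g t - c * y t) t) (hz : ∀ t, HasDerivAt z (g t - c * z t) t)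
    (h0 : y 0 = z 0) : y = z :=
  ODE_solution_unique_univ (v := fun t w => g t - c * w) (s := fun _ => Set.univ)
    (fun t => ((LipschitzWith.const (g t)).sub (lipschitzWith_smul c)).lipschitzOnWith)
    (fun t => ⟨hy t, trivial⟩) (fun t => ⟨hz t, trivial⟩) h0

noncomputable def expTaylorRemainder (n : ℕ) (c t : ℝ) : ℝ :=
  exp (c * t) - ∑ j ∈ range (n + 1), (c * t) ^ j / j !

theorem hasDerivAt_sum_range_pow_div_factorial (n : ℕ) (c t : ℝ) :
    HasDerivAt (fun t => ∑ j ∈ range (n + 1), (c * t) ^ j / j !)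
      (c * ∑ j ∈ range n, (c * t) ^ j / j !) t := by
  induction n with
  | zero => simpa using hasDerivAt_const t (1 : ℝ)
  | succ n ih =>
    have hpow : HasDerivAt (fun t => (c * t) ^ (n + 1) / (n + 1)!)
        (c * ((c * t) ^ n / n !)) t := by
      refine ((((hasDerivAt_id' t).const_mul c).fun_pow (n + 1)).div_const _).congr_deriv ?_
      push_cast [Nat.add_sub_cancel, Nat.factorial_succ]
      field_simp
    simp only [sum_range_succ _ (n + 1), sum_range_succ _ n, mul_add] at ih ⊢
    exact ih.add hpow

theorem hasDerivAt_expTaylorRemainder (n : ℕ) (c t : ℝ) :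
    HasDerivAt (expTaylorRemainder n c)
      (c * expTaylorRemainder n c t + c * (c * t) ^ n / n !) t := by
  have hexp : HasDerivAt (fun t => exp (c * t)) (exp (c * t) * c) t := by
    simpa using ((hasDerivAt_id t).const_mul c).exp
  refine (hexp.fun_sub (hasDerivAt_sum_range_pow_div_factorial n c t)).congr_deriv ?_
  rw [expTaylorRemainder, sum_range_succ]
  ring

@[simp]
theorem expTaylorRemainder_zero_right (n : ℕ) (c : ℝ) : expTaylorRemainder n c 0 = 0 := by
  simp [expTaylorRemainder, sum_range_succ', zero_pow]

theorem pow_mul_sum_range_alternating (n : ℕ) {ε : ℝ} (hε : ε ≠ 0) (t : ℝ) :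
    ε ^ n * ∑ k ∈ range (n + 1), (-1) ^ k * t ^ (n - k) / (ε ^ k * (n - k)!)
      = (-1) ^ n * ∑ j ∈ range (n + 1), (-ε * t) ^ j / j ! := by
  rw [← sum_range_reflect, mul_sum, mul_sum]
  refine sum_congr rfl fun j hj => ?_
  have hj : j ≤ n := Nat.lt_succ_iff.mp (mem_range.mp hj)
  rw [Nat.add_sub_cancel, Nat.sub_sub_self hj]
  have hpow : ε ^ n = ε ^ (n - j) * ε ^ j := by rw [← pow_add, Nat.sub_add_cancel hj]
  have hsign : (-1 : ℝ) ^ n = (-1) ^ (n - j) * (-1) ^ j := by rw [← pow_add, Nat.sub_add_cancel hj]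
  have hsq : ((-1 : ℝ) ^ j) ^ 2 = 1 := by rw [← pow_mul, mul_comm, pow_mul]; norm_num
  rw [hpow, hsign, mul_pow, neg_pow ε j]
  field_simp
  rw [hsq, mul_one]

theorem HasDerivAt.exp_neg_mul_mul {z : ℝ → ℝ} {f c t : ℝ} (β : ℝ)
    (hz : HasDerivAt z (f - c * z t) t) :
    HasDerivAt (fun t => Real.exp (-β * t) * z t)
      (Real.exp (-β * t) * f - (β + c) * (Real.exp (-β * t) * z t)) t := by
  have hexp : HasDerivAt (fun t => Real.exp (-β * t)) (Real.exp (-β * t) * -β) t := by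
    simpa using ((hasDerivAt_id t).const_mul (-β)).exp
  exact (hexp.mul hz).congr_deriv (by ring)

theorem perturbed_output_decaying_stimulus_degenerate_general
    (n : ℕ) (α : ℕ → ℝ) (β ε : ℝ) (hε : ε ≠ 0)
    (x : ℝ → ℝ) (h0 : x 0 = 0)
    (hx : ∀ t : ℝ, HasDerivAt x
      (α (n + 1) * ((∏ j ∈ Finset.Icc 1 n, α j) * t ^ n / Nat.factorial n)
        * Real.exp (-β * t) - (β + ε) * x t) t) :
    ∀ t : ℝ, x t = ((∏ l ∈ Finset.Icc 1 (n + 1), α l) / ε ^ (n + 1)) * Real.exp (-β * t) *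
      (ε ^ n * ∑ k ∈ Finset.range (n + 1),
          (-1) ^ k * t ^ (n - k) / (ε ^ k * Nat.factorial (n - k))
        + (-1) ^ (n + 1) * Real.exp (-ε * t)) := by
  have hA : α (n + 1) * ∏ j ∈ Icc 1 n, α j = ∏ l ∈ Icc 1 (n + 1), α l := by
    rw [prod_Icc_succ_top (by omega), mul_comm]
  set A := ∏ l ∈ Icc 1 (n + 1), α l
  have hεn : (-ε) ^ (n + 1) ≠ 0 := pow_ne_zero _ (neg_ne_zero.mpr hε)
  set K := A / (-ε) ^ (n + 1)
  have hz (s : ℝ) : HasDerivAt (fun s => K * expTaylorRemainder n (-ε) s)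
      (A * s ^ n / (n ! : ℝ) - ε * (K * expTaylorRemainder n (-ε) s)) s :=
    ((hasDerivAt_expTaylorRemainder n (-ε) s).const_mul K).congr_deriv (by
      simp only [K]; field_simp; ring)
  have hxF : x = fun s => exp (-β * s) * (K * expTaylorRemainder n (-ε) s) :=
    eq_of_hasDerivAt_eq_sub_mul_s16 hx
      (fun s => ((hz s).exp_neg_mul_mul β).congr_deriv (by rw [← hA]; ring)) (by simp [h0])
  intro t
  rw [hxF, pow_mul_sum_range_alternating n hε]
  simp only [K, expTaylorRemainder]
  field_simp
  rw [neg_pow ε]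
  ring_nf
  simp only [pow_mul', neg_one_sq, one_pow, mul_one]

/-- solution for the ε-perturbed output protein of a reordered cascade under an
exponentially decaying stimulus in the degenerate case `λ = β`. -/
theorem perturbed_output_decaying_stimulus_degenerate
    (n : ℕ) (hn : 1 ≤ n) (α : ℕ → ℝ) (β ε : ℝ) (hε : ε ≠ 0)
    (x : ℝ → ℝ) (h0 : x 0 = 0)
    (hx : ∀ t : ℝ, HasDerivAt x
      (α (n + 1) * ((∏ j ∈ Finset.Icc 1 n, α j) * t ^ n / Nat.factorial n)
        * Real.exp (-β * t) - (β + ε) * x t) t) :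
    ∀ t : ℝ, x t = ((∏ l ∈ Finset.Icc 1 (n + 1), α l) / ε ^ (n + 1)) * Real.exp (-β * t) *
      (ε ^ n * ∑ k ∈ Finset.range (n + 1),
          (-1) ^ k * t ^ (n - k) / (ε ^ k * Nat.factorial (n - k))
        + (-1) ^ (n + 1) * Real.exp (-ε * t)) :=
  perturbed_output_decaying_stimulus_degenerate_general n α β ε hε x h0 hx
end
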